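/- arXiv:2010.09708 — 7 statements merged into one kernel-verified Lean document; each statement's English description precedes it below -/
import Mathlib

section
/- Fix integers n and k with 2 ≤ k ≤ n−2. Let ω₀ = 1, ω₁, …, ω_{k−1} be pairwise distinct complex numbers satisfying ω_a^n = 1 for every a = 0,…,k−1 and 1 + ω₁ + ⋯ + ω_{k−1} ≠ 0. For a k-tuple of integers c = (c₁, …, c_k), let M(c) be the k×k complex matrix with entries M(c)_{a,s} = ω_a^{c_s} (rows indexed by a = 0,…,k−1, columns by s = 1,…,k), and let p(c) = det M(c); for b ∈ {1,…,k−1} and i ∈ ℤ, let D_{b,i}(c) be the sum, over those column indices s with c_s ≡ i (mod n), of the determinant of the matrix obtained from M(c) by replacing its s-th column with the standard basis column vector having 1 in row b and 0 in all other rows. Then for every j ∈ {1,…,n} the numbers p(j, j+1, …, j+k−1) and p(j, j+1, …, j+k−2, j+k) are nonzero, and for every b ∈ {1,…,k−1} and every i ∈ ℤ one has Σ_{j=1}^{n} [ D_{b,i}(j, j+1, …, j+k−1) / p(j, j+1, …, j+k−1) − D_{b,i}(j, j+1, …, j+k−2, j+k) / p(j, j+1, …, j+k−2, j+k) ] = 0.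 -/
/-!
For `d : ι → ℤ` with `W = (ω a ^ d s)` invertible, shifting all exponents by `j` gives
`diagonal (ω ^ j) * W`, so by Cramer's rule `D_{b,i}/p` at `j + d` is
`∑_{s : j + d s ≡ i} W⁻¹ s b * ω b ^ (-j)`. Over the full period `j = 1, …, n` every column `s`
is hit exactly once, with `ω b ^ (-j) = ω b ^ (d s - i)`, so the sum is
`∑_s W⁻¹ s b * ω b ^ d s * ω b ^ (-i) = ω b ^ (-i)`, independently of `d`. Both exponent patterns
of the theorem are of this form: `0, …, k - 1` gives the Vandermonde matrix, and
`0, …, k - 2, k` gives a determinant `(∑ a, ω a) · det (vandermonde ω) ≠ 0`.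
-/

open Finset Polynomial

theorem filter_Icc_intCast_modEq {n : ℕ} (hn : 0 < n) (m : ℤ) :
    (Icc 1 n).filter (fun j : ℕ => (j : ℤ) ≡ m [ZMOD n]) = {((m - 1) % n).toNat + 1} := by
  have hn' : (0 : ℤ) < n := by exact_mod_cast hn
  have hr0 : 0 ≤ (m - 1) % n := Int.emod_nonneg _ hn'.ne'
  have hrn : (m - 1) % n < n := Int.emod_lt_of_pos _ hn'
  ext j
  have hsub : (j : ℤ) ≡ m [ZMOD n] ↔ (j - 1 : ℤ) ≡ m - 1 [ZMOD n] :=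
    ⟨fun h => h.sub_right 1, fun h => by simpa using h.add_right 1⟩
  rw [mem_filter, mem_Icc, mem_singleton, hsub, Int.ModEq]
  constructor
  · rintro ⟨⟨h1, h2⟩, h⟩
    rw [Int.emod_eq_of_lt (by omega) (by omega)] at h
    omega
  · rintro rfl
    refine ⟨⟨by omega, by omega⟩, ?_⟩
    rw [Int.emod_eq_of_lt (by omega) (by omega)]
    omega

theorem card_filter_Icc_add_modEq {n : ℕ} (hn : 0 < n) (e i : ℤ) :
    ((Icc 1 n).filter fun j : ℕ => (j : ℤ) + e ≡ i [ZMOD n]).card = 1 := by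
  have h : ∀ j : ℤ, j + e ≡ i [ZMOD n] ↔ j ≡ i - e [ZMOD n] := fun j =>
    ⟨fun h => by simpa using h.sub_right e, fun h => by simpa using h.add_right e⟩
  simp only [h, filter_Icc_intCast_modEq hn, card_singleton]

theorem zpow_eq_zpow_of_modEq {G : Type*} [GroupWithZero G] {x : G} {n : ℕ} (hx : x ^ n = 1)
    {a b : ℤ} (hab : a ≡ b [ZMOD n]) : x ^ a = x ^ b := by
  rcases Nat.eq_zero_or_pos n with rfl | hn
  · obtain rfl : a = b := by simpa using hab
    rfl
  have hx0 : x ≠ 0 := (IsUnit.of_pow_eq_one hx hn.ne').ne_zero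
  obtain ⟨t, rfl⟩ := Int.modEq_iff_add_fac.mp hab
  rw [zpow_add₀ hx0, _root_.zpow_mul, zpow_natCast, hx, _root_.one_zpow, mul_one]

theorem pow_card_eq_neg_sum_coeff_mul_pow {R : Type*} [CommRing R] {ι : Type*} [Fintype ι]
    (v : ι → R) (a : ι) :
    v a ^ Fintype.card ι =
      -∑ i ∈ range (Fintype.card ι), (∏ b, (X - C (v b))).coeff i * v a ^ i := by
  nontriviality R
  have hmonic : (∏ b, (X - C (v b))).Monic := monic_prod_of_monic _ _ fun b _ => monic_X_sub_C _
  have hroot : (∏ b, (X - C (v b))).eval (v a) = 0 := by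
    rw [eval_prod]; exact prod_eq_zero (mem_univ a) (by simp)
  rw [hmonic.as_sum, natDegree_finsetProd_X_sub_C_eq_card, card_univ] at hroot
  simp only [eval_add, eval_pow, eval_X, eval_finsetSum, eval_mul, eval_C] at hroot
  exact eq_neg_of_add_eq_zero_left hroot

open Matrix

/-- Reducing `v a ^ (m + 1)` modulo `∏ b, (X - C (v b))` writes the new column as a combination
of the Vandermonde columns; only the coefficient of the replaced one, `∑ a, v a`, survives. -/
theorem det_updateCol_last_vandermonde {R : Type*} [CommRing R] {m : ℕ} (v : Fin (m + 1) → R) :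
    ((vandermonde v).updateCol (Fin.last m) fun a => v a ^ (m + 1)).det
      = (∑ a, v a) * (vandermonde v).det := by
  set P := ∏ b, (X - C (v b))
  have hcol : (fun a => v a ^ (m + 1)) =
      fun a => ∑ i : Fin (m + 1), (-P.coeff i) • vandermonde v a i := by
    funext a
    have h := pow_card_eq_neg_sum_coeff_mul_pow v a
    rw [Fintype.card_fin, ← Fin.sum_univ_eq_sum_range (fun i => P.coeff i * v a ^ i)] at h
    simp [h, vandermonde_apply]
  have hcoeff : P.coeff m = -∑ a, v a := by
    simpa using prod_X_sub_C_coeff_card_pred univ v (by simp)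
  rw [hcol, det_updateCol_sum, smul_eq_mul, Fin.val_last, hcoeff, neg_neg]

section PowMatrix

variable {K ι : Type*} [Field K] [Fintype ι] [DecidableEq ι]

theorem det_updateCol_single_div_det (A : Matrix ι ι K) (s b : ι) :
    (A.updateCol s (Pi.single b 1)).det / A.det = A⁻¹ s b := by
  rw [← cramer_apply, cramer_eq_adjugate_mulVec, mulVec_single_one, Matrix.inv_def,
    Ring.inverse_eq_inv', Matrix.smul_apply, smul_eq_mul, div_eq_inv_mul, col_apply]

theorem inv_diagonal_mul_apply {v : ι → K} (hv : ∀ a, v a ≠ 0) (W : Matrix ι ι K) (s b : ι) :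
    (diagonal v * W)⁻¹ s b = W⁻¹ s b * (v b)⁻¹ := by
  have hinv : diagonal v * diagonal v⁻¹ = 1 := by
    rw [diagonal_mul_diagonal, ← diagonal_one]
    exact congrArg diagonal (funext fun a => mul_inv_cancel₀ (hv a))
  rw [Matrix.mul_inv_rev, inv_eq_right_inv hinv, mul_diagonal, Pi.inv_apply]

def powMatrix (ω : ι → K) (c : ι → ℤ) : Matrix ι ι K :=
  of fun a s => ω a ^ c s

/-- `D_{b,i}(c) / p(c)`, i.e. `∂ log p(c) / ∂ x_{b,i}` at `x = ω`, reading column `s` of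
`powMatrix ω c` as the point labelled `c s mod n`. -/
def logDetPartial (n : ℕ) (ω : ι → K) (b : ι) (i : ℤ) (c : ι → ℤ) : K :=
  (∑ s ∈ univ.filter (fun s => c s ≡ i [ZMOD n]),
    ((powMatrix ω c).updateCol s (Pi.single b 1)).det) / (powMatrix ω c).det

theorem powMatrix_add_left {ω : ι → K} (hω : ∀ a, ω a ≠ 0) (j : ℤ) (d : ι → ℤ) :
    powMatrix ω (fun s => j + d s) = diagonal (fun a => ω a ^ j) * powMatrix ω d := by
  ext a s
  simp [powMatrix, diagonal_mul, zpow_add₀ (hω a)]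

theorem det_powMatrix_add_left_ne_zero {ω : ι → K} (hω : ∀ a, ω a ≠ 0) {d : ι → ℤ}
    (hW : (powMatrix ω d).det ≠ 0) (j : ℤ) : (powMatrix ω (fun s => j + d s)).det ≠ 0 := by
  rw [powMatrix_add_left hω, det_mul, det_diagonal]
  exact mul_ne_zero (prod_ne_zero_iff.mpr fun a _ => zpow_ne_zero _ (hω a)) hW

theorem logDetPartial_add_left {n : ℕ} {ω : ι → K} (hω : ∀ a, ω a ^ n = 1) (hn : 0 < n)
    (b : ι) (i j : ℤ) (d : ι → ℤ) :
    logDetPartial n ω b i (fun s => j + d s)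
      = ∑ s ∈ univ.filter (fun s => j + d s ≡ i [ZMOD n]),
          (powMatrix ω d)⁻¹ s b * ω b ^ (d s - i) := by
  have hω0 a : ω a ≠ 0 := (IsUnit.of_pow_eq_one (hω a) hn.ne').ne_zero
  rw [logDetPartial, sum_div]
  refine sum_congr rfl fun s hs => ?_
  have hmod : -j ≡ d s - i [ZMOD n] := by
    rw [Int.modEq_iff_dvd, show d s - i - -j = -(i - (j + d s)) by ring, dvd_neg]
    exact Int.modEq_iff_dvd.mp (mem_filter.mp hs).2
  rw [det_updateCol_single_div_det, powMatrix_add_left hω0, inv_diagonal_mul_apply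
    (fun a => zpow_ne_zero _ (hω0 a)), ← _root_.zpow_neg, zpow_eq_zpow_of_modEq (hω b) hmod]

theorem sum_inv_mul_zpow_powMatrix {ω : ι → K} {d : ι → ℤ} (hW : (powMatrix ω d).det ≠ 0)
    (b : ι) : ∑ s, (powMatrix ω d)⁻¹ s b * ω b ^ d s = 1 := by
  have h := congrFun (congrFun (mul_nonsing_inv _ (isUnit_iff_ne_zero.mpr hW)) b) b
  rw [mul_apply, one_apply_eq] at h
  simpa [powMatrix, mul_comm] using h

theorem sum_logDetPartial_add_left {n : ℕ} {ω : ι → K} (hω : ∀ a, ω a ^ n = 1) (hn : 0 < n)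
    {d : ι → ℤ} (hW : (powMatrix ω d).det ≠ 0) (b : ι) (i : ℤ) :
    ∑ j ∈ Icc 1 n, logDetPartial n ω b i (fun s => (j : ℤ) + d s) = ω b ^ (-i) := by
  have hω0 : ω b ≠ 0 := (IsUnit.of_pow_eq_one (hω b) hn.ne').ne_zero
  calc ∑ j ∈ Icc 1 n, logDetPartial n ω b i (fun s => (j : ℤ) + d s)
      = ∑ s, ∑ j ∈ (Icc 1 n).filter (fun j : ℕ => (j : ℤ) + d s ≡ i [ZMOD n]),
          (powMatrix ω d)⁻¹ s b * ω b ^ (d s - i) := by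
        simp only [logDetPartial_add_left hω hn]
        exact sum_comm' (fun j s => by simp only [mem_filter, mem_univ, true_and, and_comm])
    _ = ∑ s, (powMatrix ω d)⁻¹ s b * ω b ^ d s * ω b ^ (-i) := by
        simp only [sum_const, card_filter_Icc_add_modEq hn, one_smul, sub_eq_add_neg,
          zpow_add₀ hω0, mul_assoc]
    _ = ω b ^ (-i) := by rw [← sum_mul, sum_inv_mul_zpow_powMatrix hW, one_mul]

end PowMatrix

/-- Cyclic fixed points (given by distinct n-th roots of unity with
nonvanishing sum) satisfy the planar kinematics scattering equations. -/
theorem stmt_0 (n k : ℕ) (hk : 2 ≤ k) (hkn : k + 2 ≤ n)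
    (ω : Fin k → ℂ) (hdist : Function.Injective ω)
    (hroot : ∀ a, ω a ^ n = 1) (hsum : ∑ a, ω a ≠ 0) :
    let M : (Fin k → ℤ) → Matrix (Fin k) (Fin k) ℂ :=
      fun c => Matrix.of fun a s => ω a ^ c s
    let p : (Fin k → ℤ) → ℂ := fun c => (M c).det
    let D : Fin k → ℤ → (Fin k → ℤ) → ℂ := fun b i c =>
      ∑ s ∈ Finset.univ.filter fun s => c s ≡ i [ZMOD (n : ℤ)],
        (Matrix.updateCol (M c) s fun a => if a = b then 1 else 0).det
    let c1 : ℕ → Fin k → ℤ := fun j s => (j : ℤ) + s.val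
    let c2 : ℕ → Fin k → ℤ :=
      fun j s => if s.val = k - 1 then (j : ℤ) + k else (j : ℤ) + s.val
    (∀ j ∈ Finset.Icc 1 n, p (c1 j) ≠ 0 ∧ p (c2 j) ≠ 0) ∧
    (∀ b : Fin k, b.val ≠ 0 → ∀ i : ℤ,
      ∑ j ∈ Finset.Icc 1 n,
        (D b i (c1 j) / p (c1 j) - D b i (c2 j) / p (c2 j)) = 0) := by
  intro M p D c1 c2
  obtain ⟨m, rfl⟩ : ∃ m, k = m + 1 := ⟨k - 1, by omega⟩
  have hn : 0 < n := by omega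
  have hω0 a : ω a ≠ 0 := (IsUnit.of_pow_eq_one (hroot a) hn.ne').ne_zero
  set d1 : Fin (m + 1) → ℤ := fun s => s.val
  set d2 : Fin (m + 1) → ℤ := fun s => if s = Fin.last m then (m + 1 : ℕ) else s.val
  have hc2 : c2 = fun (j : ℕ) s => (j : ℤ) + d2 s := by
    funext j s
    simp only [c2, d2, Fin.ext_iff, Fin.val_last, add_tsub_cancel_right]
    split_ifs <;> rfl
  have hV : (powMatrix ω d1).det ≠ 0 := det_vandermonde_ne_zero_iff.mpr hdist
  have hW : (powMatrix ω d2).det ≠ 0 := by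
    have h : powMatrix ω d2 = (vandermonde ω).updateCol (Fin.last m) fun a => ω a ^ (m + 1) := by
      ext a s
      by_cases hs : s = Fin.last m <;> simp [powMatrix, d2, hs, vandermonde_apply, ← zpow_natCast]
    rw [h, det_updateCol_last_vandermonde]
    exact mul_ne_zero hsum hV
  have hD b i c : D b i c / p c = logDetPartial n ω b i c := by
    have hsingle : (fun a => if a = b then (1 : ℂ) else 0) = Pi.single b 1 :=
      funext fun a => (Pi.single_apply b 1 a).symm
    simp only [D, p, M, logDetPartial, powMatrix, hsingle]
  refine ⟨fun j _ => ⟨det_powMatrix_add_left_ne_zero hω0 hV j,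
    hc2 ▸ det_powMatrix_add_left_ne_zero hω0 hW j⟩, fun b _ i => ?_⟩
  rw [sum_sub_distrib, hc2]
  simp only [hD]
  rw [sum_logDetPartial_add_left hroot hn hV, sum_logDetPartial_add_left hroot hn hW, sub_self]
end

section
/- Let ω be a complex number with ω ≠ 0, ω ≠ 1 and ω ≠ −1, and set y_j = ω^j for every integer j. Then for every integer i the four differences y_{i−1} − y_i, y_i − y_{i+1}, y_{i−2} − y_i, y_i − y_{i+2} are nonzero and −1/(y_{i−1} − y_i) + 1/(y_i − y_{i+1}) + 1/(y_{i−2} − y_i) − 1/(y_i − y_{i+2}) = 0. -/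
/-! On a geometric chain `y j = ω ^ j`, both `y i - y (i + k)` and `y (i - k) - y i` are
`1 - ω ^ k` times a power of `ω`, and the two powers differ by the factor `ω ^ k`. Hence
`1 / (y i - y (i + k)) - 1 / (y (i - k) - y i) = 1 / y i` for every step `k`, and the
equation is the difference of these identities for `k = 1` and `k = 2`. -/

section GeometricChain

variable {K : Type*} [Field K] {ω : K} {k : ℤ}

lemma zpow_sub_zpow_add_eq_mul (h0 : ω ≠ 0) (j : ℤ) :
    ω ^ j - ω ^ (j + k) = ω ^ j * (1 - ω ^ k) := by
  rw [zpow_add₀ h0]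
  ring

lemma zpow_sub_zpow_add_ne_zero (h0 : ω ≠ 0) (hk : ω ^ k ≠ 1) (j : ℤ) :
    ω ^ j - ω ^ (j + k) ≠ 0 := by
  rw [zpow_sub_zpow_add_eq_mul h0]
  exact mul_ne_zero (zpow_ne_zero j h0) (sub_ne_zero.mpr hk.symm)

lemma one_div_zpow_sub_zpow_add_sub_one_div_zpow_sub_sub_zpow (h0 : ω ≠ 0) (hk : ω ^ k ≠ 1)
    (i : ℤ) :
    1 / (ω ^ i - ω ^ (i + k)) - 1 / (ω ^ (i - k) - ω ^ i) = 1 / ω ^ i := by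
  have hpred : ω ^ (i - k) - ω ^ i = ω ^ i * (1 - ω ^ k) / ω ^ k := by
    rw [← zpow_sub_zpow_add_eq_mul h0, zpow_sub₀ h0, zpow_add₀ h0]
    field_simp
  have hω : ω ^ k ≠ 0 := zpow_ne_zero k h0
  have hi : ω ^ i ≠ 0 := zpow_ne_zero i h0
  have hgap : 1 - ω ^ k ≠ 0 := sub_ne_zero.mpr hk.symm
  rw [hpred, zpow_sub_zpow_add_eq_mul h0]
  field_simp

end GeometricChain

/-- For ω ∈ ℂ with ω ≠ 0, 1, −1 and y_j = ω^j, the k=2 infinite-chain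
scattering equation holds at the geometric configuration. -/
theorem stmt_1 (ω : ℂ) (h0 : ω ≠ 0) (h1 : ω ≠ 1) (hm1 : ω ≠ -1) (i : ℤ) :
    let y : ℤ → ℂ := fun j => ω ^ j
    (y (i - 1) - y i ≠ 0 ∧ y i - y (i + 1) ≠ 0 ∧
      y (i - 2) - y i ≠ 0 ∧ y i - y (i + 2) ≠ 0) ∧
    -(1 / (y (i - 1) - y i)) + 1 / (y i - y (i + 1))
      + 1 / (y (i - 2) - y i) - 1 / (y i - y (i + 2)) = 0 := by
  intro y
  have hstep1 : ω ^ (1 : ℤ) ≠ 1 := by rwa [zpow_one]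
  have hstep2 : ω ^ (2 : ℤ) ≠ 1 := by
    rw [zpow_two, ← sq, Ne, sq_eq_one_iff, not_or]
    exact ⟨h1, hm1⟩
  refine ⟨⟨?_, zpow_sub_zpow_add_ne_zero h0 hstep1 i, ?_, zpow_sub_zpow_add_ne_zero h0 hstep2 i⟩,
    ?_⟩
  · simpa using zpow_sub_zpow_add_ne_zero h0 hstep1 (i - 1)
  · simpa using zpow_sub_zpow_add_ne_zero h0 hstep2 (i - 2)
  · linear_combination one_div_zpow_sub_zpow_add_sub_one_div_zpow_sub_sub_zpow h0 hstep1 i -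
      one_div_zpow_sub_zpow_add_sub_one_div_zpow_sub_sub_zpow h0 hstep2 i
end

section
/- Let k ≥ 2, let ω₀, ω₁, …, ω_{k−1} be nonzero complex numbers, and let i be an integer. Let c = (c₁, …, c_k) = (i, i+1, i+2, …, i+k−2, i+k), and let M be the k×k complex matrix with entries M_{a,s} = ω_a^{c_s} (rows indexed by a = 0,…,k−1 in this order, columns by s = 1,…,k in this order). Then det M = (ω₀ω₁⋯ω_{k−1})^i · (ω₀ + ω₁ + ⋯ + ω_{k−1}) · ∏_{0 ≤ a < b ≤ k−1} (ω_b − ω_a). In particular, when the ω_a are pairwise distinct, det M = 0 if and only if ω₀ + ω₁ + ⋯ + ω_{k−1} = 0. -/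
open Polynomial Matrix Finset in
/-- Evaluation of the minor p_{i,i+1,…,i+k−2,i+k} for a cyclic
configuration, and its vanishing criterion. -/
theorem stmt_2 (k : ℕ) (hk : 2 ≤ k) (ω : Fin k → ℂ) (hω : ∀ a, ω a ≠ 0) (i : ℤ) :
    let c : Fin k → ℤ := fun s => if s.val = k - 1 then i + k else i + s.val
    let M : Matrix (Fin k) (Fin k) ℂ := Matrix.of fun a s => ω a ^ c s
    M.det = (∏ a, ω a) ^ i * (∑ a, ω a) *
        ∏ b : Fin k, ∏ a ∈ Finset.Iio b, (ω b - ω a) ∧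
    (Function.Injective ω → (M.det = 0 ↔ ∑ a, ω a = 0)) := by
  intro c M
  have hk0 : 0 < k := by omega
  set P : Polynomial ℂ := ∏ b : Fin k, (X - C (ω b)) with hP
  have hPdeg : P.natDegree = k := by
    rw [hP, natDegree_prod _ _ (fun b _ => X_sub_C_ne_zero (ω b))]
    simp
  have hPmonic : P.Monic :=
    monic_prod_of_monic _ _ fun b _ => monic_X_sub_C _
  have hcoeffk : P.coeff k = 1 := by
    have := hPmonic.coeff_natDegree
    rwa [hPdeg] at this
  have hcoeffk1 : P.coeff (k - 1) = -∑ a, ω a := by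
    have := prod_X_sub_C_coeff_card_pred (Finset.univ : Finset (Fin k)) ω
      (by simpa using hk0)
    simpa using this
  -- key algebraic identity : ω a ^ k as linear combination of lower powers
  have hpow : ∀ a : Fin k, ω a ^ k = ∑ j : Fin k, (-(P.coeff j.val)) * ω a ^ (j : ℕ) := by
    intro a
    have hroot : P.eval (ω a) = 0 := by
      rw [hP, eval_prod]
      exact Finset.prod_eq_zero (Finset.mem_univ a) (by simp)
    have h := eval_eq_sum_range' (p := P) (n := k + 1) (by omega) (ω a)
    rw [hroot, Finset.sum_range_succ, hcoeffk, one_mul] at h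
    have hx : ω a ^ k = -∑ x ∈ Finset.range k, P.coeff x * ω a ^ x := by
      linear_combination -h
    rw [hx, Fin.sum_univ_eq_sum_range (fun j => -P.coeff j * ω a ^ j) k]
    simp [neg_mul, Finset.sum_neg_distrib]
  set j0 : Fin k := ⟨k - 1, by omega⟩ with hj0
  set A : Matrix (Fin k) (Fin k) ℂ := Matrix.vandermonde ω with hA
  set N : Matrix (Fin k) (Fin k) ℂ := A.updateCol j0 (fun a => ω a ^ k) with hN
  have hM : M = Matrix.of fun a s => ω a ^ i * N a s := by
    ext a s
    simp only [M, N, A, Matrix.of_apply, Matrix.updateCol_apply, Matrix.vandermonde_apply, c]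
    have hs : (s = j0) ↔ (s.val = k - 1) := by
      rw [Fin.ext_iff]
    by_cases h : s.val = k - 1
    · rw [if_pos h, if_pos (hs.mpr h),
        zpow_add₀ (hω a), zpow_natCast]
    · rw [if_neg h, if_neg (fun hh => h (hs.mp hh)),
        zpow_add₀ (hω a), zpow_natCast]
  have hdetN : N.det = (∑ a, ω a) * A.det := by
    have hcol : (fun a => ω a ^ k) = fun a => ∑ j : Fin k, (-(P.coeff j.val)) • A a j := by
      funext a
      simpa [A, Matrix.vandermonde_apply, smul_eq_mul] using hpow a
    rw [hN, hcol, Matrix.det_updateCol_sum A j0 (fun j => -(P.coeff j.val))]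
    have : ((j0 : Fin k).val : ℕ) = k - 1 := rfl
    rw [smul_eq_mul, this, hcoeffk1, neg_neg]
  have hdetA : A.det = ∏ b : Fin k, ∏ a ∈ Finset.Iio b, (ω b - ω a) := by
    rw [hA, Matrix.det_vandermonde]
    exact Finset.prod_comm' (by simp)
  have hdetM : M.det = (∏ a, ω a) ^ i * ((∑ a, ω a) *
      ∏ b : Fin k, ∏ a ∈ Finset.Iio b, (ω b - ω a)) := by
    rw [hM, Matrix.det_mul_column, hdetN, hdetA, Finset.prod_zpow]
  constructor
  · rw [hdetM]; ring
  · intro hinj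
    rw [hdetM]
    have h1 : (∏ a, ω a) ^ i ≠ 0 :=
      zpow_ne_zero _ (Finset.prod_ne_zero_iff.mpr fun a _ => hω a)
    have h2 : (∏ b : Fin k, ∏ a ∈ Finset.Iio b, (ω b - ω a)) ≠ 0 := by
      rw [Finset.prod_ne_zero_iff]
      intro b _
      rw [Finset.prod_ne_zero_iff]
      intro a ha
      exact sub_ne_zero.mpr fun h => (Finset.mem_Iio.mp ha).ne' (hinj h)
    constructor
    · intro h
      rcases mul_eq_zero.mp h with h | h
      · exact absurd h h1
      · rcases mul_eq_zero.mp h with h | h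
        · exact h
        · exact absurd h h2
    · intro h; rw [h]; ring
end

section
/- Let n ≥ 2 and 1 ≤ k ≤ n−1. For j ∈ [n] = {1,…,n}, define the linear functional L_j on ℝ^n by L_j(y) = Σ_{t=1}^{n−1} t · y_{j+t}, where indices are taken modulo n in {1,…,n}. For a k-element subset J of [n], let e_J ∈ ℝ^n be its indicator vector, and define h_J ∈ ℝ^{C(n,k)} (with coordinates indexed by the k-element subsets of [n]) by (h_J)_I = (1/n) · min{ L_1(e_I − e_J), …, L_n(e_I − e_J) } for each k-element subset I. Then the family (h_J), indexed by all k-element subsets J of [n], is linearly independent, and hence (having C(n,k) members) is a basis of ℝ^{C(n,k)}. -/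
/-!
Write `c_{I,J}(j) = L_j(e_I - e_J)` (`momentDiff I J j` below), so that
`h_J(I) = (1/n) min_j c_{I,J}(j)`. For `|I| = |J|` one has
`c_{I,J}(j + 1) = c_{I,J}(j) + n ((e_I)_j - (e_J)_j)`: all values of `c_{I,J}` are congruent
mod `n`, `c_{I,J}` is non-increasing along `J` and non-decreasing off `J`.

Moving a set `S` of starting points of the cyclic runs of `J` one step down replaces
`c_{I,J}(j)` by `c_{I,J}(j) + |S| - n [j ∈ S]`. If `I ≠ J`, some run start `a` has
`c_{I,J}(a) ≥ min c_{I,J} + n` (otherwise minimality propagates along every run and `J ⊆ I`), so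
lowering `c_{I,J}` by `n` at `a` never changes its minimum. Inclusion–exclusion over `S` then
expresses each coordinate vector `e_J` through the `h`'s and the all-ones vector. For a cyclic
interval `J = [a, a + k)` the minimum of `c_{I,J}` is attained at `a + k`, and summing over `a`
gives a nonzero multiple of the all-ones vector. Hence the `C(n, k)` vectors `h_J` span.
-/

open Finset
open scoped Fin.NatCast Fin.CommRing

section PowersetSums

variable {α R : Type*} [DecidableEq α] [CommRing R]

theorem sum_powerset_neg_one_pow_card_eq_ite (T : Finset α) :
    ∑ S ∈ T.powerset, (-1 : R) ^ #S = if T = ∅ then 1 else 0 := by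
  have h := congrArg (Int.cast : ℤ → R) (sum_powerset_neg_one_pow_card (x := T))
  push_cast at h
  exact h

theorem sum_powerset_neg_one_pow_card_mul_card (T : Finset α) :
    ∑ S ∈ T.powerset, (-1 : R) ^ #S * #S = if #T = 1 then -1 else 0 := by
  rcases T.eq_empty_or_nonempty with rfl | ⟨a, ha⟩
  · simp
  have hcard : #T = 1 ↔ T.erase a = ∅ := by
    rw [← card_eq_zero, card_erase_of_mem ha]
    have := card_pos.mpr ⟨a, ha⟩
    omega
  rw [← insert_erase ha, sum_powerset_insert (notMem_erase a T), ← sum_add_distrib,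
    insert_erase ha]
  have hpair : ∀ S ∈ (T.erase a).powerset,
      (-1 : R) ^ #S * #S + (-1) ^ #(insert a S) * #(insert a S) = -(-1) ^ #S := by
    intro S hS
    rw [card_insert_of_notMem fun h => notMem_erase a T (mem_powerset.mp hS h)]
    push_cast
    ring
  rw [sum_congr rfl hpair, sum_neg_distrib, sum_powerset_neg_one_pow_card_eq_ite]
  simp only [hcard]
  split_ifs <;> simp

/-- The terms for `S` and `insert a S` cancel. -/
theorem sum_powerset_neg_one_pow_card_mul_eq_zero {T : Finset α} {a : α} (ha : a ∈ T)
    {f : Finset α → R} (hf : ∀ S ⊆ T.erase a, f (insert a S) = f S) :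
    ∑ S ∈ T.powerset, (-1 : R) ^ #S * f S = 0 := by
  rw [← insert_erase ha, sum_powerset_insert (notMem_erase a T), ← sum_add_distrib]
  refine sum_eq_zero fun S hS => ?_
  rw [card_insert_of_notMem fun h => notMem_erase a T (mem_powerset.mp hS h),
    hf S (mem_powerset.mp hS), pow_succ]
  ring

end PowersetSums

section FiniteInfimum

variable {ι : Type*} [Finite ι] [Nonempty ι]

theorem ciInf_add_const (f : ι → ℝ) (c : ℝ) : ⨅ i, (f i + c) = (⨅ i, f i) + c :=
  ((OrderIso.addRight c).map_ciInf (Finite.bddBelow_range f)).symm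

theorem ciInf_sub_ite_mem_insert [DecidableEq ι] {c : ι → ℝ} {d : ℝ} (hd : 0 ≤ d) {a : ι}
    (ha : (⨅ i, c i) + d ≤ c a) (S : Finset ι) :
    ⨅ i, (c i - if i ∈ insert a S then d else 0) = ⨅ i, (c i - if i ∈ S then d else 0) := by
  refine le_antisymm (ciInf_mono (Finite.bddBelow_range _) fun i => ?_) (le_ciInf fun i => ?_)
  · split_ifs <;> simp_all
  by_cases hia : i = a
  · obtain ⟨j, hj⟩ := exists_eq_ciInf_of_finite (f := c)
    calc (⨅ i, (c i - if i ∈ S then d else 0)) ≤ c j - if j ∈ S then d else 0 :=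
          ciInf_le (Finite.bddBelow_range _) j
      _ ≤ c a - d := by split_ifs <;> linarith
      _ = c i - if i ∈ insert a S then d else 0 := by simp [hia]
  · exact (ciInf_le (Finite.bddBelow_range _) i).trans_eq (by simp [hia])

theorem ciInf_zero_sub_ite_mem [DecidableEq ι] {d : ℝ} (hd : 0 ≤ d) (S : Finset ι) :
    ⨅ i, ((0 : ℝ) - if i ∈ S then d else 0) = if S = ∅ then 0 else -d := by
  rcases S.eq_empty_or_nonempty with rfl | ⟨a, ha⟩
  · simp
  rw [if_neg (nonempty_iff_ne_empty.mp ⟨a, ha⟩)]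
  refine le_antisymm ?_ (le_ciInf fun i => ?_)
  · exact (ciInf_le (Finite.bddBelow_range _) a).trans_eq (by simp [ha])
  · split_ifs <;> linarith

end FiniteInfimum

theorem mul_sum_range_lt {n k : ℕ} (hk1 : 1 ≤ k) (hk : k < n) :
    k * ∑ u ∈ range n, u < n * ∑ s ∈ range k, (s + (n - k)) := by
  obtain ⟨m, rfl⟩ : ∃ m, n = k + m + 1 := ⟨n - k - 1, by omega⟩
  obtain ⟨k, rfl⟩ : ∃ k', k = k' + 1 := ⟨k - 1, by omega⟩
  have hsumn := sum_range_id_mul_two (k + 1 + m + 1)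
  have hsumk := sum_range_id_mul_two (k + 1)
  rw [sum_add_distrib, sum_const, card_range, smul_eq_mul,
    show k + 1 + m + 1 - (k + 1) = m + 1 by omega]
  simp only [Nat.add_sub_cancel] at hsumn hsumk
  -- after doubling, the right side exceeds the left one by `n k (n - k)`
  have key : (k + 1 + m + 1) * (k + 1) * (k + 1 + m)
      < (k + 1 + m + 1) * (k + 1) * (k + 2 * m + 2) :=
    Nat.mul_lt_mul_of_pos_left (by omega) (Nat.mul_pos (by omega) (by omega))
  linarith [congrArg (· * (k + 1)) hsumn, congrArg (· * (k + 1 + m + 1)) hsumk]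

namespace BladeHeight

variable {n : ℕ}

/-- `moment j K` is `L_j(e_K)`. -/
def moment (j : Fin n) (K : Finset (Fin n)) : ℕ := ∑ x ∈ K, (x - j).val

noncomputable def momentDiff (I J : Finset (Fin n)) (j : Fin n) : ℝ := moment j I - moment j J

variable [NeZero n]

def runStarts (J : Finset (Fin n)) : Finset (Fin n) := {a ∈ J | a - 1 ∉ J}

def shiftDown (S J : Finset (Fin n)) : Finset (Fin n) := (J \ S) ∪ S.image (· - 1)

def interval (a : Fin n) (k : ℕ) : Finset (Fin n) :=
  (range k).image fun s : ℕ => a + (s : Fin n)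

noncomputable def height (k : ℕ) (J : {J : Finset (Fin n) // #J = k})
    (I : {I : Finset (Fin n) // #I = k}) : ℝ :=
  (1 / n) * ⨅ j, momentDiff I.1 J.1 j

variable {I J S : Finset (Fin n)}

theorem sum_val_mul_ite_add_mem (j : Fin n) (K : Finset (Fin n)) :
    ∑ t : Fin n, (t.val : ℝ) * (if j + t ∈ K then 1 else 0) = moment j K :=
  calc ∑ t : Fin n, (t.val : ℝ) * (if j + t ∈ K then 1 else 0)
      = ∑ x : Fin n, if x ∈ K then ((x - j).val : ℝ) else 0 :=
        Fintype.sum_equiv (Equiv.addLeft j) _ _ fun t => by simp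
    _ = moment j K := by rw [sum_ite_mem, univ_inter, moment, Nat.cast_sum]

theorem momentDiff_eq_sum (I J : Finset (Fin n)) (j : Fin n) :
    momentDiff I J j = ∑ t : Fin n,
      (t.val : ℝ) * ((if j + t ∈ I then 1 else 0) - if j + t ∈ J then 1 else 0) := by
  simp only [mul_sub, sum_sub_distrib, sum_val_mul_ite_add_mem, momentDiff]

theorem val_sub_add_one (x j : Fin n) :
    ((x - (j + 1)).val : ℝ) = (x - j).val - 1 + if x = j then (n : ℝ) else 0 := by
  obtain ⟨m, rfl⟩ := Nat.exists_eq_succ_of_ne_zero (NeZero.ne n)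
  rw [show x - (j + 1) = x - j - 1 by ring, Fin.coe_sub_one]
  rcases eq_or_ne x j with rfl | hxj
  · simp
  · have h0 : x - j ≠ 0 := sub_ne_zero.mpr hxj
    have h1 : 1 ≤ (x - j).val := Nat.one_le_iff_ne_zero.mpr (Fin.val_ne_zero_iff.mpr h0)
    simp [h0, hxj, Nat.cast_sub h1]

theorem moment_add_one (j : Fin n) (K : Finset (Fin n)) :
    moment (j + 1) K = moment j (K.image (· - 1)) := by
  rw [moment, moment, sum_image fun x _ y _ h => sub_left_injective h]
  exact sum_congr rfl fun x _ => by rw [show x - 1 - j = x - (j + 1) by ring]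

theorem moment_image_sub_one (j : Fin n) (K : Finset (Fin n)) :
    (moment j (K.image (· - 1)) : ℝ) = moment j K - #K + if j ∈ K then (n : ℝ) else 0 := by
  rw [← moment_add_one, moment, moment, Nat.cast_sum, Nat.cast_sum]
  simp_rw [val_sub_add_one]
  rw [sum_add_distrib, sum_sub_distrib, sum_ite_eq', card_eq_sum_ones, Nat.cast_sum,
    Nat.cast_one]

theorem momentDiff_add_one (hc : #I = #J) (j : Fin n) :
    momentDiff I J (j + 1) =
      momentDiff I J j + n * ((if j ∈ I then 1 else 0) - if j ∈ J then 1 else 0) := by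
  simp only [momentDiff, moment_add_one, moment_image_sub_one, hc]
  split_ifs <;> ring

theorem exists_momentDiff_add_natCast_sub_eq (hc : #I = #J) (j : Fin n) (m : ℕ) :
    ∃ z : ℤ, momentDiff I J (j + m) - momentDiff I J j = n * z := by
  induction m with
  | zero => exact ⟨0, by simp⟩
  | succ m ih =>
    obtain ⟨z, hz⟩ := ih
    refine ⟨z + ((if j + m ∈ I then 1 else 0) - if j + m ∈ J then 1 else 0), ?_⟩
    rw [Nat.cast_succ, ← add_assoc, momentDiff_add_one hc]
    push_cast
    linear_combination hz

theorem exists_momentDiff_sub_eq (hc : #I = #J) (i j : Fin n) :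
    ∃ z : ℤ, momentDiff I J i - momentDiff I J j = n * z := by
  simpa using exists_momentDiff_add_natCast_sub_eq hc j (i - j).val

theorem momentDiff_le_add_natCast (hc : #I = #J) {j : Fin n} {m : ℕ}
    (h : ∀ t < m, j + (t : Fin n) ∉ J) : momentDiff I J j ≤ momentDiff I J (j + m) := by
  induction m with
  | zero => simp
  | succ m ih =>
    have hle := ih fun t ht => h t (ht.trans m.lt_succ_self)
    rw [Nat.cast_succ, ← add_assoc, momentDiff_add_one hc, if_neg (h m m.lt_succ_self)]
    have hn : (0 : ℝ) ≤ n := Nat.cast_nonneg n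
    split_ifs <;> linarith

theorem momentDiff_add_natCast_le (hc : #I = #J) {j : Fin n} {m : ℕ}
    (h : ∀ t < m, j + (t : Fin n) ∈ J) : momentDiff I J (j + m) ≤ momentDiff I J j := by
  induction m with
  | zero => simp
  | succ m ih =>
    have hle := ih fun t ht => h t (ht.trans m.lt_succ_self)
    rw [Nat.cast_succ, ← add_assoc, momentDiff_add_one hc, if_pos (h m m.lt_succ_self)]
    have hn : (0 : ℝ) ≤ n := Nat.cast_nonneg n
    split_ifs <;> nlinarith

theorem runStarts_induction (hJ : J ≠ univ) {P : Fin n → Prop}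
    (start : ∀ a ∈ runStarts J, P a)
    (step : ∀ a ∈ J, a + 1 ∈ J → P a → P (a + 1)) : ∀ b ∈ J, P b := by
  have key : ∀ m : ℕ, ∀ b ∈ J, b - (m : Fin n) ∉ J → P b := by
    intro m
    induction m with
    | zero => intro b hb h; simp_all
    | succ m ih =>
      intro b hb hm
      by_cases hb1 : b - 1 ∈ J
      · have hPb1 := ih _ hb1 (by rwa [sub_sub, add_comm, ← Nat.cast_succ])
        simpa using step _ hb1 (by simpa using hb) hPb1
      · exact start b (mem_filter.mpr ⟨hb, hb1⟩)
  obtain ⟨x, hx⟩ : ∃ x, x ∉ J := by simpa [eq_univ_iff_forall] using hJ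
  intro b hb
  exact key (b - x).val b hb (by simpa using hx)

theorem runStarts_nonempty (hne : J.Nonempty) (hJ : J ≠ univ) : (runStarts J).Nonempty := by
  by_contra h
  rw [not_nonempty_iff_eq_empty] at h
  obtain ⟨b, hb⟩ := hne
  exact runStarts_induction (P := fun _ => False) hJ (by simp [h]) (fun _ _ _ h => h) b hb

theorem momentDiff_eq_iInf_of_lt (hc : #I = #J) {a : Fin n}
    (ha : momentDiff I J a < (⨅ j, momentDiff I J j) + n) :
    momentDiff I J a = ⨅ j, momentDiff I J j := by
  obtain ⟨j₀, hj₀⟩ := exists_eq_ciInf_of_finite (f := momentDiff I J)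
  obtain ⟨z, hz⟩ := exists_momentDiff_sub_eq hc a j₀
  have hn : (0 : ℝ) < n := Nat.cast_pos.mpr (NeZero.pos n)
  have hle : momentDiff I J j₀ ≤ momentDiff I J a :=
    hj₀ ▸ ciInf_le (Finite.bddBelow_range _) a
  have : z = 0 := by
    have hz0 : 0 ≤ z := by exact_mod_cast (by nlinarith : (0 : ℝ) ≤ z)
    have hz1 : z < 1 := by exact_mod_cast (by nlinarith : (z : ℝ) < 1)
    omega
  rw [this, Int.cast_zero, mul_zero, sub_eq_zero] at hz
  rw [hz, hj₀]

theorem mem_of_momentDiff_eq_iInf (hc : #I = #J) {j : Fin n} (hj : j ∈ J)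
    (hmin : momentDiff I J j = ⨅ i, momentDiff I J i) :
    j ∈ I ∧ momentDiff I J (j + 1) = ⨅ i, momentDiff I J i := by
  have hle := ciInf_le (Finite.bddBelow_range (momentDiff I J)) (j + 1)
  have hstep := momentDiff_add_one hc j
  rw [if_pos hj, hmin] at hstep
  by_cases hjI : j ∈ I
  · rw [if_pos hjI, sub_self, mul_zero, add_zero] at hstep
    exact ⟨hjI, hstep⟩
  · rw [if_neg hjI] at hstep
    have hn : (0 : ℝ) < n := Nat.cast_pos.mpr (NeZero.pos n)
    linarith

theorem exists_mem_runStarts_iInf_add_le (hc : #I = #J) (hIJ : I ≠ J) (hJ : J ≠ univ) :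
    ∃ a ∈ runStarts J, (⨅ j, momentDiff I J j) + n ≤ momentDiff I J a := by
  by_contra! h
  have hmin : ∀ b ∈ J, momentDiff I J b = ⨅ j, momentDiff I J j :=
    runStarts_induction hJ (fun a ha => momentDiff_eq_iInf_of_lt hc (h a ha))
      fun a ha _ hmin => (mem_of_momentDiff_eq_iInf hc ha hmin).2
  exact hIJ (eq_of_subset_of_card_le
    (fun b hb => (mem_of_momentDiff_eq_iInf hc hb (hmin b hb)).1) hc.le).symm

theorem disjoint_sdiff_image_sub_one (hS : S ⊆ runStarts J) :
    Disjoint (J \ S) (S.image (· - 1)) := by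
  rw [disjoint_right]
  rintro _ hy hmem
  obtain ⟨a, ha, rfl⟩ := mem_image.mp hy
  exact (mem_filter.mp (hS ha)).2 (mem_sdiff.mp hmem).1

theorem card_shiftDown (hS : S ⊆ runStarts J) : #(shiftDown S J) = #J := by
  have hSJ : S ⊆ J := hS.trans (filter_subset _ _)
  rw [shiftDown, card_union_of_disjoint (disjoint_sdiff_image_sub_one hS),
    card_image_of_injective _ sub_left_injective, card_sdiff_of_subset hSJ,
    Nat.sub_add_cancel (card_le_card hSJ)]

theorem momentDiff_shiftDown (hS : S ⊆ runStarts J) (I : Finset (Fin n)) (j : Fin n) :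
    momentDiff I (shiftDown S J) j =
      (momentDiff I J j - if j ∈ S then (n : ℝ) else 0) + #S := by
  have hsplit : moment j (J \ S) + moment j S = moment j J :=
    sum_sdiff (hS.trans (filter_subset _ _))
  have hunion : moment j (shiftDown S J) = moment j (J \ S) + moment j (S.image (· - 1)) :=
    sum_union (disjoint_sdiff_image_sub_one hS)
  rw [momentDiff, momentDiff, hunion, Nat.cast_add, moment_image_sub_one, ← hsplit, Nat.cast_add]
  ring

theorem sum_powerset_runStarts_iInf_sub_ite (hc : #I = #J) (hne : J.Nonempty) (hJ : J ≠ univ) :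
    ∑ S ∈ (runStarts J).powerset,
        (-1 : ℝ) ^ #S * ⨅ j, (momentDiff I J j - if j ∈ S then (n : ℝ) else 0)
      = if J = I then (n : ℝ) else 0 := by
  have hn : (0 : ℝ) ≤ n := Nat.cast_nonneg n
  split_ifs with hJI
  · subst hJI
    simp_rw [momentDiff, sub_self, ciInf_zero_sub_ite_mem hn]
    calc ∑ S ∈ (runStarts J).powerset, (-1 : ℝ) ^ #S * (if S = ∅ then 0 else -(n : ℝ))
        = ∑ S ∈ (runStarts J).powerset, (-n * (-1) ^ #S + if S = ∅ then (n : ℝ) else 0) :=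
          sum_congr rfl fun S _ => by split_ifs with h <;> simp [h, mul_comm]
      _ = n := by
          rw [sum_add_distrib, ← mul_sum, sum_powerset_neg_one_pow_card_eq_ite,
            if_neg (runStarts_nonempty hne hJ).ne_empty, sum_ite_eq', if_pos (empty_mem_powerset _)]
          ring
  · obtain ⟨a, ha, hle⟩ := exists_mem_runStarts_iInf_add_le hc (Ne.symm hJI) hJ
    exact sum_powerset_neg_one_pow_card_mul_eq_zero ha fun S _ => ciInf_sub_ite_mem_insert hn hle S

theorem sum_powerset_runStarts_iInf_momentDiff_shiftDown (hc : #I = #J) (hne : J.Nonempty)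
    (hJ : J ≠ univ) :
    ∑ S ∈ (runStarts J).powerset, (-1 : ℝ) ^ #S * ⨅ j, momentDiff I (shiftDown S J) j
      = (if J = I then (n : ℝ) else 0) - if #(runStarts J) = 1 then 1 else 0 := by
  have hterm : ∀ S ∈ (runStarts J).powerset,
      (-1 : ℝ) ^ #S * ⨅ j, momentDiff I (shiftDown S J) j
        = (-1) ^ #S * (⨅ j, (momentDiff I J j - if j ∈ S then (n : ℝ) else 0))
          + (-1) ^ #S * #S := by
    intro S hS
    simp_rw [momentDiff_shiftDown (mem_powerset.mp hS), ciInf_add_const]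
    ring
  rw [sum_congr rfl hterm, sum_add_distrib, sum_powerset_runStarts_iInf_sub_ite hc hne hJ,
    sum_powerset_neg_one_pow_card_mul_card]
  split_ifs <;> ring

section Interval

variable {k : ℕ}

theorem injOn_add_natCast (a : Fin n) (hk : k ≤ n) :
    Set.InjOn (fun s : ℕ => a + (s : Fin n)) (range k) := by
  intro s hs t ht hst
  have := congrArg Fin.val (add_left_cancel hst)
  rwa [Fin.val_cast_of_lt ((mem_range.mp hs).trans_le hk),
    Fin.val_cast_of_lt ((mem_range.mp ht).trans_le hk)] at this

theorem card_interval (a : Fin n) (hk : k ≤ n) : #(interval a k) = k := by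
  rw [interval, card_image_of_injOn (injOn_add_natCast a hk), card_range]

theorem add_natCast_mem_interval {a : Fin n} {s : ℕ} (hk : k ≤ n) (hs : s < n) :
    a + (s : Fin n) ∈ interval a k ↔ s < k := by
  refine ⟨fun h => ?_, fun h => mem_image_of_mem _ (mem_range.mpr h)⟩
  obtain ⟨t, ht, hts⟩ := mem_image.mp h
  rw [← injOn_add_natCast a le_rfl (mem_range.mpr ((mem_range.mp ht).trans_le hk))
    (mem_range.mpr hs) hts]
  exact mem_range.mp ht

theorem iInf_momentDiff_interval (hI : #I = k) (hk : k ≤ n) (a : Fin n) :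
    ⨅ j, momentDiff I (interval a k) j = momentDiff I (interval a k) (a + k) := by
  have hc : #I = #(interval a k) := by rw [hI, card_interval a hk]
  refine le_antisymm (ciInf_le (Finite.bddBelow_range _) _) (le_ciInf fun j => ?_)
  obtain ⟨u, hu, rfl⟩ : ∃ u < n, a + (u : Fin n) = j :=
    ⟨(j - a).val, (j - a).isLt, by simp⟩
  rcases lt_or_ge u k with huk | hku
  · have hwalk := momentDiff_add_natCast_le hc (j := a + u) (m := k - u) fun t ht => by
      rw [add_assoc, ← Nat.cast_add, add_natCast_mem_interval hk (by omega)]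
      omega
    rwa [add_assoc, ← Nat.cast_add, Nat.add_sub_cancel' huk.le] at hwalk
  · have hwalk := momentDiff_le_add_natCast hc (j := a + k) (m := u - k) fun t ht => by
      rw [add_assoc, ← Nat.cast_add, add_natCast_mem_interval hk (by omega)]
      omega
    rwa [add_assoc, ← Nat.cast_add, Nat.add_sub_cancel' hku] at hwalk

theorem moment_interval (hk : k < n) (a : Fin n) :
    moment (a + (k : Fin n)) (interval a k) = ∑ s ∈ range k, (s + (n - k)) := by
  rw [moment, interval, sum_image (injOn_add_natCast a hk.le)]
  refine sum_congr rfl fun s hs => ?_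
  have hs : s < k := mem_range.mp hs
  rw [show a + (s : Fin n) - (a + (k : Fin n)) = ((s + (n - k) : ℕ) : Fin n) by
      rw [Nat.cast_add, Nat.cast_sub hk.le, Fin.natCast_self]; ring,
    Fin.val_cast_of_lt (by omega)]

theorem sum_moment_add_right (I : Finset (Fin n)) (v : Fin n) :
    ∑ a : Fin n, moment (a + v) I = #I * ∑ u ∈ range n, u :=
  calc ∑ a : Fin n, moment (a + v) I
      = ∑ j : Fin n, moment j I := Fintype.sum_equiv (Equiv.addRight v) _ _ fun _ => rfl
    _ = ∑ x ∈ I, ∑ j : Fin n, (x - j).val := sum_comm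
    _ = ∑ x ∈ I, ∑ u : Fin n, u.val :=
        sum_congr rfl fun x _ => Fintype.sum_equiv (Equiv.subLeft x) _ _ fun _ => rfl
    _ = #I * ∑ u ∈ range n, u := by
        rw [sum_const, smul_eq_mul, Fin.sum_univ_eq_sum_range (fun u => u) n]

end Interval

section Span

variable {k : ℕ}

theorem exists_ne_zero_sum_height_interval_eq_const (hk1 : 1 ≤ k) (hk : k < n) :
    ∃ c : ℝ, c ≠ 0 ∧
      ∑ a : Fin n, height k ⟨interval a k, card_interval a hk.le⟩ = fun _ => c := by
  have hn : (n : ℝ) ≠ 0 := Nat.cast_ne_zero.mpr (NeZero.ne n)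
  refine ⟨(1 / n) *
      ((k * ∑ u ∈ range n, u : ℕ) - (n * ∑ s ∈ range k, (s + (n - k)) : ℕ)),
    mul_ne_zero (one_div_ne_zero hn)
      (sub_ne_zero.mpr (Nat.cast_lt.mpr (mul_sum_range_lt hk1 hk)).ne), ?_⟩
  funext I
  have hterm : ∀ a : Fin n, height k ⟨interval a k, card_interval a hk.le⟩ I =
      (1 / n) * ((moment (a + (k : Fin n)) I.1 : ℝ) - (∑ s ∈ range k, (s + (n - k)) : ℕ)) :=
    fun a => by rw [height, iInf_momentDiff_interval I.2 hk.le, momentDiff, moment_interval hk]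
  rw [Finset.sum_apply, sum_congr rfl fun a _ => hterm a, ← mul_sum, sum_sub_distrib,
    ← Nat.cast_sum, sum_moment_add_right, I.2, sum_const, card_univ, Fintype.card_fin,
    nsmul_eq_mul]
  push_cast
  ring

theorem const_mem_span_range_height (hk1 : 1 ≤ k) (hk : k < n) :
    (fun _ => (1 : ℝ)) ∈ Submodule.span ℝ (Set.range (height (n := n) k)) := by
  obtain ⟨c, hc, hsum⟩ := exists_ne_zero_sum_height_interval_eq_const hk1 hk
  have hmem : ∑ a : Fin n, height k ⟨interval a k, card_interval a hk.le⟩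
      ∈ Submodule.span ℝ (Set.range (height k)) :=
    Submodule.sum_mem _ fun a _ => Submodule.subset_span ⟨_, rfl⟩
  rw [hsum] at hmem
  convert Submodule.smul_mem _ c⁻¹ hmem using 1
  funext I
  exact (inv_mul_cancel₀ hc).symm

theorem single_mem_span_range_height (hk1 : 1 ≤ k) (hk : k < n)
    (K : {K : Finset (Fin n) // #K = k}) :
    Pi.single K 1 ∈ Submodule.span ℝ (Set.range (height k)) := by
  have hne : K.1.Nonempty := card_pos.mp (by omega)
  have hK : K.1 ≠ univ := (card_lt_iff_ne_univ _).mp (by simpa [K.2] using hk)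
  let shifted (S : (runStarts K.1).powerset) : {J : Finset (Fin n) // #J = k} :=
    ⟨shiftDown S.1 K.1, (card_shiftDown (mem_powerset.mp S.2)).trans K.2⟩
  have hsingle : Pi.single K 1 = ∑ S ∈ (runStarts K.1).powerset.attach,
        (-1 : ℝ) ^ #S.1 • height k (shifted S)
      + ((1 / n) * if #(runStarts K.1) = 1 then 1 else 0 : ℝ) • fun _ => 1 := by
    funext I
    have hsum := sum_powerset_runStarts_iInf_momentDiff_shiftDown (I.2.trans K.2.symm) hne hK
    have hn : (n : ℝ) ≠ 0 := Nat.cast_ne_zero.mpr (NeZero.ne n)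
    simp only [Pi.add_apply, Finset.sum_apply, Pi.smul_apply, smul_eq_mul, height, shifted]
    rw [sum_attach _ fun S =>
      (-1 : ℝ) ^ #S * ((1 / n) * ⨅ j, momentDiff I.1 (shiftDown S K.1) j)]
    simp_rw [mul_left_comm _ (1 / (n : ℝ))]
    rw [← mul_sum, hsum, Pi.single_apply]
    rcases eq_or_ne I K with rfl | hIK
    · field_simp
      simp
    · rw [if_neg hIK, if_neg fun h => hIK (Subtype.ext h.symm)]
      ring
  rw [hsingle]
  exact Submodule.add_mem _
    (Submodule.sum_mem _ fun S _ => Submodule.smul_mem _ _ (Submodule.subset_span ⟨_, rfl⟩))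
    (Submodule.smul_mem _ _ (const_mem_span_range_height hk1 hk))

theorem span_range_height_eq_top (hk1 : 1 ≤ k) (hk : k < n) :
    Submodule.span ℝ (Set.range (height (n := n) k)) = ⊤ := by
  rw [eq_top_iff, ← (Pi.basisFun ℝ _).span_eq, Submodule.span_le]
  rintro _ ⟨K, rfl⟩
  rw [Pi.basisFun_apply]
  exact single_mem_span_range_height hk1 hk K

end Span

end BladeHeight

theorem stmt_9_general (n k : ℕ) (hk1 : 1 ≤ k) (hk : k ≤ n - 1) :
    let L : Fin n → (Fin n → ℝ) → ℝ := fun j y => ∑ t : Fin n, (t.val : ℝ) * y (j + t)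
    let ind : Finset (Fin n) → Fin n → ℝ := fun J t => if t ∈ J then 1 else 0
    let h : {J : Finset (Fin n) // J.card = k} → {I : Finset (Fin n) // I.card = k} → ℝ :=
      fun J I => (1 / n) * ⨅ j : Fin n, L j fun t => ind I.1 t - ind J.1 t
    LinearIndependent ℝ h ∧ Submodule.span ℝ (Set.range h) = ⊤ := by
  intro L ind h
  have : NeZero n := ⟨by omega⟩
  have hh : h = BladeHeight.height k := by
    funext J I
    simp only [h, L, ind, BladeHeight.height, BladeHeight.momentDiff_eq_sum]
  have hspan : Submodule.span ℝ (Set.range h) = ⊤ :=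
    hh ▸ BladeHeight.span_range_height_eq_top hk1 (by omega)
  exact ⟨linearIndependent_of_top_le_span_of_card_eq_finrank hspan.ge
    (Module.finrank_pi ℝ).symm, hspan⟩

/-- The height vectors h_J of the blades pinned at the vertices of the
hypersimplex form a basis of ℝ^{C(n,k)}. -/
theorem stmt_9 (n k : ℕ) (hn : 2 ≤ n) (hk1 : 1 ≤ k) (hk : k ≤ n - 1) :
    let L : Fin n → (Fin n → ℝ) → ℝ := fun j y => ∑ t : Fin n, (t.val : ℝ) * y (j + t)
    let ind : Finset (Fin n) → Fin n → ℝ := fun J t => if t ∈ J then 1 else 0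
    let h : {J : Finset (Fin n) // J.card = k} → {I : Finset (Fin n) // I.card = k} → ℝ :=
      fun J I => (1 / n) * ⨅ j : Fin n, L j fun t => ind I.1 t - ind J.1 t
    LinearIndependent ℝ h ∧ Submodule.span ℝ (Set.range h) = ⊤ :=
  stmt_9_general n k hk1 hk
end

section
/- Let 2 ≤ k ≤ n−2. Call a k-element subset of [n] = {1,…,n} frozen if it is a cyclic interval {i, i+1, …, i+k−1} (indices mod n) for some i, and nonfrozen otherwise. Suppose α : {1,…,k−1} × {1,…,n−k} → ℤ satisfies Σ_{j=1}^{n−k} α_{i,j} = 0 for every i ∈ {1,…,k−1}, and that for every nonfrozen k-element subset J = {j₁ < j₂ < ⋯ < j_k} of [n] one has Σ_{i=1}^{k−1} Σ_{j = j_i − (i−1)}^{j_{i+1} − i − 1} α_{i,j} > −1, where an inner sum over an empty index range is 0. Then α_{i,j} = 0 for all (i,j). -/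
/-!
For a row `i` and `0 ≤ c < d ≤ n - k`, the `k`-subset made of `i` consecutive elements starting
at `c` and `k - i` consecutive elements starting at `i + d` is nonfrozen unless
`(c, d) = (0, n - k)`, and its facet inequality reads `-1 < ∑_{c < j ≤ d} α i j`. Over `ℤ` these
segment sums are thus nonnegative; since a prefix and the complementary suffix of row `i` add up
to the row sum `0`, every prefix sum vanishes, hence so does `α`.
-/

open Finset

theorem StrictMono.coe_orderIsoOfFin_image {α : Type*} [LinearOrder α] {k : ℕ} {f : Fin k → α}
    (hf : StrictMono f) (h : (univ.image f).card = k) (r : Fin k) :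
    ((univ.image f).orderIsoOfFin h r : α) = f r := by
  rw [coe_orderIsoOfFin_apply]
  exact congrFun (orderEmbOfFin_unique h (fun x => mem_image_of_mem f (mem_univ x)) hf).symm r

section SegmentSums

variable {M : Type*} [AddCommGroup M] [PartialOrder M] [IsOrderedAddMonoid M]

theorem eq_zero_of_sum_Ioc_nonneg {f : ℕ → M} {N : ℕ} (htotal : ∑ j ∈ Icc 1 N, f j = 0)
    (hsegment : ∀ c d, c < d → d ≤ N → 0 < c ∨ d < N → 0 ≤ ∑ j ∈ Ioc c d, f j)
    {j : ℕ} (hj : j ∈ Icc 1 N) : f j = 0 := by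
  have hIcc : Icc 1 N = Ioc 0 N := Icc_add_one_left_eq_Ioc 0 N
  rw [hIcc] at htotal hj
  have hprefix : ∀ m ≤ N, ∑ j ∈ Ioc 0 m, f j = 0 := by
    intro m hm
    rcases Nat.eq_zero_or_pos m with rfl | hm0
    · simp
    rcases hm.eq_or_lt with rfl | hmN
    · exact htotal
    have hsplit := sum_Ioc_consecutive f (Nat.zero_le m) hmN.le
    have hhead := hsegment 0 m hm0 hmN.le (Or.inr hmN)
    have htail := hsegment m N hmN le_rfl (Or.inl hm0)
    rw [htotal] at hsplit
    exact le_antisymm (by rw [← hsplit]; exact le_add_of_nonneg_right htail) hhead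
  obtain ⟨hj0, hjN⟩ := mem_Ioc.mp hj
  obtain ⟨i, rfl⟩ : ∃ i, j = i + 1 := ⟨j - 1, by omega⟩
  have := sum_Ioc_succ_top (Nat.zero_le i) f
  rw [hprefix (i + 1) hjN, hprefix i (by omega), zero_add] at this
  exact this.symm

end SegmentSums

def cyclicInterval (n k : ℕ) (i : Fin n) : Finset (Fin n) :=
  univ.image fun t : Fin k => (⟨(i.val + t.val) % n, Nat.mod_lt _ i.pos⟩ : Fin n)

theorem val_eq_of_mem_cyclicInterval {n k : ℕ} {i x : Fin n} (hx : x ∈ cyclicInterval n k i)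
    (hsucc : ∀ y ∈ cyclicInterval n k i, (y : ℕ) ≠ (x + 1) % n) :
    (x : ℕ) = (i + (k - 1)) % n := by
  obtain ⟨t, -, rfl⟩ := mem_image.mp hx
  suffices ht : (t : ℕ) + 1 = k by simp only [← ht, Nat.add_sub_cancel]
  by_contra ht
  refine hsucc ⟨(i + (t + 1)) % n, Nat.mod_lt _ i.pos⟩
    (mem_image.mpr ⟨⟨t + 1, by omega⟩, mem_univ _, rfl⟩) ?_
  simp only [Nat.mod_add_mod, Nat.add_assoc]

theorem not_exists_eq_cyclicInterval {n k : ℕ} {J : Finset (Fin n)} {a b : Fin n}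
    (ha : a ∈ J) (hb : b ∈ J) (hab : a ≠ b)
    (ha' : ∀ y ∈ J, (y : ℕ) ≠ (a + 1) % n) (hb' : ∀ y ∈ J, (y : ℕ) ≠ (b + 1) % n) :
    ¬ ∃ i, J = cyclicInterval n k i := by
  rintro ⟨i, rfl⟩
  exact hab (Fin.ext ((val_eq_of_mem_cyclicInterval ha ha').trans
    (val_eq_of_mem_cyclicInterval hb hb').symm))

-- The facet functional of `J`, with `J` enumerated from `0`: the paper's range
-- `j_r - (r - 1) ≤ j ≤ j_{r+1} - r - 1` is `J (r - 1) - (r - 1) < j ≤ J r - r` here.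
def facetSum {n k : ℕ} (α : ℕ → ℕ → ℤ) (J : Finset (Fin n)) (hJ : J.card = k) : ℤ :=
  ∑ i : Fin (k - 1),
    ∑ j ∈ Icc ((((J.orderIsoOfFin hJ ⟨i.val, i.isLt.trans_le (k.sub_le 1)⟩ : Fin n) : ℕ) + 1)
          - i.val)
        (((((J.orderIsoOfFin hJ ⟨i.val + 1, Nat.add_lt_of_lt_sub i.isLt⟩ : Fin n) : ℕ) + 1)
          - (i.val + 1)) - 1),
      α (i.val + 1) j

def twoBlock {n k : ℕ} (i c d : ℕ) (hcd : c ≤ d) (hd : k + d ≤ n) (r : Fin k) : Fin n :=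
  ⟨r + if (r : ℕ) < i then c else d, by have := r.isLt; split_ifs <;> omega⟩

section TwoBlock

variable {n k i c d : ℕ} (hcd : c ≤ d) (hd : k + d ≤ n)

theorem val_twoBlock (r : Fin k) :
    (twoBlock i c d hcd hd r : ℕ) = r + if (r : ℕ) < i then c else d :=
  rfl

theorem twoBlock_strictMono : StrictMono (twoBlock i c d hcd hd) := by
  intro r s hrs
  rw [Fin.lt_def] at hrs ⊢
  simp only [val_twoBlock]
  split_ifs <;> omega

theorem card_image_twoBlock : (univ.image (twoBlock i c d hcd hd)).card = k := by
  rw [card_image_of_injective _ (twoBlock_strictMono hcd hd).injective, card_univ,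
    Fintype.card_fin]

theorem not_exists_image_twoBlock_eq_cyclicInterval (hi : 0 < i) (hik : i < k) (hgap : c < d)
    (hproper : 0 < c ∨ k + d < n) :
    ¬ ∃ s, univ.image (twoBlock i c d hcd hd) = cyclicInterval n k s := by
  have hval : ∀ y ∈ univ.image (twoBlock i c d hcd hd), ∃ r < k,
      (y : ℕ) = r + if r < i then c else d := by
    intro y hy
    obtain ⟨r, -, rfl⟩ := mem_image.mp hy
    exact ⟨r, r.isLt, rfl⟩
  set a := twoBlock i c d hcd hd ⟨i - 1, by omega⟩
  set b := twoBlock i c d hcd hd ⟨k - 1, by omega⟩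
  have ha : (a : ℕ) = i - 1 + c := by rw [val_twoBlock, if_pos (show i - 1 < i by omega)]
  have hb : (b : ℕ) = k - 1 + d := by rw [val_twoBlock, if_neg (show ¬k - 1 < i by omega)]
  refine not_exists_eq_cyclicInterval (mem_image_of_mem _ (mem_univ _))
    (mem_image_of_mem _ (mem_univ _)) (a := a) (b := b) ?_ ?_ ?_
  · rw [Ne, Fin.ext_iff, ha, hb]
    omega
  · intro y hy
    obtain ⟨r, hr, hy⟩ := hval y hy
    rw [hy, ha, Nat.mod_eq_of_lt (by omega)]
    split_ifs <;> omega
  · intro y hy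
    obtain ⟨r, hr, hy⟩ := hval y hy
    rw [hy, hb]
    rcases hd.lt_or_eq with hlt | heq
    · rw [Nat.mod_eq_of_lt (by omega)]
      split_ifs <;> omega
    · rw [show k - 1 + d + 1 = n by omega, Nat.mod_self]
      split_ifs <;> omega

theorem facetSum_image_twoBlock (α : ℕ → ℕ → ℤ) (hi : 0 < i) (hik : i < k) :
    facetSum α _ (card_image_twoBlock hcd hd (i := i)) = ∑ j ∈ Ioc c d, α i j := by
  unfold facetSum
  simp only [(twoBlock_strictMono hcd hd).coe_orderIsoOfFin_image, val_twoBlock]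
  rw [Fintype.sum_eq_single ⟨i - 1, by omega⟩]
  · dsimp only
    rw [if_pos (by omega), if_neg (by omega), ← Icc_add_one_left_eq_Ioc,
      Nat.sub_add_cancel hi]
    congr 1
    ext
    simp only [mem_Icc]
    omega
  · intro r hr
    have hr : (r : ℕ) ≠ i - 1 := fun h => hr (Fin.ext h)
    split_ifs <;> exact sum_eq_zero fun j hj => by simp only [mem_Icc] at hj; omega

end TwoBlock

/-- The origin is the unique interior lattice point of the polytope
Π_{k,n}: any integer matrix α with vanishing row sums satisfying all the strict facet
inequalities of Π_{k,n} is zero. -/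
theorem stmt_12 (n k : ℕ)
    (α : ℕ → ℕ → ℤ)
    (hrow : ∀ i ∈ Finset.Icc 1 (k - 1), ∑ j ∈ Finset.Icc 1 (n - k), α i j = 0)
    (hineq : ∀ (J : Finset (Fin n)) (hJ : J.card = k),
      (¬ ∃ i : Fin n, J = Finset.image
          (fun t : Fin k => (⟨(i.val + t.val) % n, Nat.mod_lt _ i.pos⟩ : Fin n))
          Finset.univ) →
      -1 < ∑ i : Fin (k - 1),
        ∑ j ∈ Finset.Icc
            ((((J.orderIsoOfFin hJ ⟨i.val, by have := i.isLt; omega⟩ : Fin n) : ℕ) + 1)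
              - i.val)
            (((((J.orderIsoOfFin hJ ⟨i.val + 1, by have := i.isLt; omega⟩ : Fin n) : ℕ) + 1)
              - (i.val + 1)) - 1),
          α (i.val + 1) j) :
    ∀ i ∈ Finset.Icc 1 (k - 1), ∀ j ∈ Finset.Icc 1 (n - k), α i j = 0 := by
  intro i hi j hj
  obtain ⟨hi0, hik⟩ := mem_Icc.mp hi
  have hsegment : ∀ c d, c < d → d ≤ n - k → 0 < c ∨ d < n - k →
      0 ≤ ∑ j ∈ Ioc c d, α i j := by
    intro c d hcd hd hproper
    have hfacet : -1 < facetSum α _ (card_image_twoBlock hcd.le (by omega : k + d ≤ n) (i := i)) :=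
      hineq _ _ (not_exists_image_twoBlock_eq_cyclicInterval _ _ hi0 (by omega) hcd (by omega))
    rw [facetSum_image_twoBlock _ _ _ hi0 (by omega)] at hfacet
    omega
  exact eq_zero_of_sum_Ioc_nonneg (hrow i hi) hsegment hj
end

section
/- Let N ≥ 1 and 0 ≤ r ≤ N. Let H be an N×N symmetric complex matrix and V an N×r complex matrix such that the null space {x ∈ ℂ^N : Hx = 0} equals the column space of V. For an r-element subset I ⊆ {1,…,N}, let V_I be the r×r submatrix of V formed by the rows indexed by I (in increasing order), and for r-element subsets I, J ⊆ {1,…,N} let H^I_J be the (N−r)×(N−r) submatrix of H obtained by deleting the rows indexed by I and the columns indexed by J (keeping the remaining rows and columns in increasing order). If I, J, I′, J′ are r-element subsets of {1,…,N} with det(V_I), det(V_J), det(V_{I′}), det(V_{J′}) all nonzero, then det(H^I_J) / (det(V_I) · det(V_J)) = ± det(H^{I′}_{J′}) / (det(V_{I′}) · det(V_{J′})), i.e. the two ratios are either equal or negatives of each other. -/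
namespace Stmt14

/-- The r×r submatrix of V formed by the rows indexed by I, in increasing order. -/
noncomputable def rowSub {N r : ℕ} (V : Matrix (Fin N) (Fin r) ℂ)
    (I : Finset (Fin N)) (hI : I.card = r) : Matrix (Fin r) (Fin r) ℂ :=
  V.submatrix (fun t => (I.orderIsoOfFin hI t : Fin N)) id

/-- The (N−r)×(N−r) submatrix of H obtained by deleting the rows indexed by I and the
columns indexed by J, keeping the remaining rows and columns in increasing order. -/
noncomputable def delSub {N r : ℕ} (H : Matrix (Fin N) (Fin N) ℂ)
    (I J : Finset (Fin N)) (hI : I.card = r) (hJ : J.card = r) :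
    Matrix (Fin (N - r)) (Fin (N - r)) ℂ :=
  H.submatrix
    (fun t => (Iᶜ.orderIsoOfFin (by simp [Finset.card_compl, hI]) t : Fin N))
    (fun t => (Jᶜ.orderIsoOfFin (by simp [Finset.card_compl, hJ]) t : Fin N))

/-!
Complementary minors: if `Wᵀ A = 0`, where `A` has `m` columns, `W` has `r` columns and there
are `m + r` rows, then `det A_{Iᶜ} · det W_{I'} = ± det A_{I'ᶜ} · det W_I` for any two `r`-sets
`I`, `I'` of rows. To see it, compare two evaluations of `det (Φᵀ Ψ)` for `Φ = [A | E_I]` and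
`Ψ = [E_{I'ᶜ} | W]`, where `E_S` is the 0/1 matrix selecting the rows in `S`: since `Aᵀ W = 0`
the product is block triangular, while `Φ` and `Ψ` are themselves block triangular up to a row
permutation.

For the theorem, apply this to the columns of `H` outside `J` (annihilated by `Vᵀ` because
`H` is symmetric with `H V = 0`) to replace `I` by `I'`, then transpose to replace `J` by `J'`.
-/

end Stmt14

namespace Matrix

variable {R n α β : Type*} [CommRing R]

theorem sq_det_submatrix_equiv_left {ι : Type*} [Fintype ι] [DecidableEq ι]
    (M : Matrix n ι R) (e e' : ι ≃ n) :
    (M.submatrix e id).det ^ 2 = (M.submatrix e' id).det ^ 2 := by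
  have : M.submatrix e id = (M.submatrix e' id).submatrix (e.trans e'.symm) id := by
    ext i j; simp
  rw [this, det_permute, mul_pow, ← Int.cast_pow, ← Units.val_pow_eq_pow_val,
    Int.units_sq, Units.val_one, Int.cast_one, one_mul]

theorem mul_eq_zero_of_range_mulVecLin_le_ker {m : Type*} [Fintype n] [Fintype m]
    [DecidableEq m] {H : Matrix n n R} {V : Matrix n m R}
    (h : LinearMap.range V.mulVecLin ≤ LinearMap.ker H.mulVecLin) : H * V = 0 := by
  rw [LinearMap.range_le_ker_iff, ← mulVecLin_mul, ← toLin'_apply'] at h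
  exact toLin'.injective (h.trans (map_zero _).symm)

variable [DecidableEq n] [Fintype α] [DecidableEq α] [Fintype β] [DecidableEq β]

theorem det_submatrix_fromCols_one_submatrix_right (A : Matrix n α R) (e : α ⊕ β ≃ n) :
    ((fromCols A ((1 : Matrix n n R).submatrix id (e ∘ Sum.inr))).submatrix e id).det
      = (A.submatrix (e ∘ Sum.inl) id).det := by
  have : (fromCols A ((1 : Matrix n n R).submatrix id (e ∘ Sum.inr))).submatrix e id
      = fromBlocks (A.submatrix (e ∘ Sum.inl) id) 0 (A.submatrix (e ∘ Sum.inr) id) 1 := by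
    ext (i | i) (j | j) <;> simp [one_apply]
  rw [this, det_fromBlocks_zero₁₂, det_one, mul_one]

theorem det_submatrix_fromCols_one_submatrix_left (W : Matrix n β R) (e : α ⊕ β ≃ n) :
    ((fromCols ((1 : Matrix n n R).submatrix id (e ∘ Sum.inl)) W).submatrix e id).det
      = (W.submatrix (e ∘ Sum.inr) id).det := by
  have : (fromCols ((1 : Matrix n n R).submatrix id (e ∘ Sum.inl)) W).submatrix e id
      = fromBlocks 1 (W.submatrix (e ∘ Sum.inl) id) 0 (W.submatrix (e ∘ Sum.inr) id) := by
    ext (i | i) (j | j) <;> simp [one_apply]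
  rw [this, det_fromBlocks_zero₂₁, det_one, one_mul]

variable [Fintype n]

theorem sq_det_submatrix_mul_det_submatrix_compl (A : Matrix n α R) (W : Matrix n β R)
    (hWA : Wᵀ * A = 0) (e e' : α ⊕ β ≃ n) :
    ((A.submatrix (e' ∘ Sum.inl) id).det * (W.submatrix (e ∘ Sum.inr) id).det) ^ 2
      = ((A.submatrix (e ∘ Sum.inl) id).det * (W.submatrix (e' ∘ Sum.inr) id).det) ^ 2 := by
  set Φ := fromCols A ((1 : Matrix n n R).submatrix id (e ∘ Sum.inr))
  set Ψ := fromCols ((1 : Matrix n n R).submatrix id (e' ∘ Sum.inl)) W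
  have hblock : (Φᵀ * Ψ).det
      = (A.submatrix (e' ∘ Sum.inl) id).det * (W.submatrix (e ∘ Sum.inr) id).det := by
    have hAW : Aᵀ * W = 0 := by
      rw [← transpose_transpose (Aᵀ * W), transpose_mul, transpose_transpose, hWA,
        transpose_zero]
    have hA : Aᵀ * (1 : Matrix n n R).submatrix id (e' ∘ Sum.inl)
        = (A.submatrix (e' ∘ Sum.inl) id)ᵀ := by
      ext; simp [mul_apply, one_apply]
    have hW : ((1 : Matrix n n R).submatrix id (e ∘ Sum.inr))ᵀ * W
        = W.submatrix (e ∘ Sum.inr) id := by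
      ext; simp [mul_apply, one_apply]
    simp only [Φ, Ψ, transpose_fromCols, fromRows_mul_fromCols, hAW, det_fromBlocks_zero₁₂]
    rw [hA, hW, det_transpose]
  have hreindex : Φᵀ * Ψ = (Φ.submatrix e id)ᵀ * Ψ.submatrix e id := by
    rw [transpose_submatrix, submatrix_mul_equiv, submatrix_id_id]
  rw [← hblock, hreindex, det_mul, det_transpose, mul_pow, sq_det_submatrix_equiv_left Ψ e e',
    det_submatrix_fromCols_one_submatrix_right, det_submatrix_fromCols_one_submatrix_left,
    mul_pow]

end Matrix

namespace Stmt14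

open Matrix

variable {N r : ℕ}

noncomputable def complSumEquiv (I : Finset (Fin N)) (hI : I.card = r) :
    Fin (N - r) ⊕ Fin r ≃ Fin N :=
  (Equiv.sumComm _ _).trans <|
    ((I.orderIsoOfFin hI).toEquiv.sumCongr
      ((Iᶜ.orderIsoOfFin (by simp [Finset.card_compl, hI])).toEquiv.trans
        (Equiv.subtypeEquivRight fun _ => Finset.mem_compl))).trans
    (Equiv.sumCompl (· ∈ I))

theorem rowSub_eq_submatrix (V : Matrix (Fin N) (Fin r) ℂ) (I : Finset (Fin N))
    (hI : I.card = r) : rowSub V I hI = V.submatrix (complSumEquiv I hI ∘ Sum.inr) id :=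
  rfl

theorem delSub_eq_submatrix (H : Matrix (Fin N) (Fin N) ℂ) (I J : Finset (Fin N))
    (hI : I.card = r) (hJ : J.card = r) :
    delSub H I J hI hJ
      = (H.submatrix id (complSumEquiv J hJ ∘ Sum.inl)).submatrix
          (complSumEquiv I hI ∘ Sum.inl) id :=
  rfl

theorem det_delSub_comm {H : Matrix (Fin N) (Fin N) ℂ} (hH : H.IsSymm) (I J : Finset (Fin N))
    (hI : I.card = r) (hJ : J.card = r) :
    (delSub H I J hI hJ).det = (delSub H J I hJ hI).det := by
  rw [← det_transpose]
  unfold delSub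
  rw [transpose_submatrix, hH.eq]

theorem sq_det_delSub_mul_det_rowSub {H : Matrix (Fin N) (Fin N) ℂ}
    {V : Matrix (Fin N) (Fin r) ℂ} (hVH : Vᵀ * H = 0) (I I' J : Finset (Fin N))
    (hI : I.card = r) (hI' : I'.card = r) (hJ : J.card = r) :
    ((delSub H I J hI hJ).det * (rowSub V I' hI').det) ^ 2
      = ((delSub H I' J hI' hJ).det * (rowSub V I hI).det) ^ 2 := by
  have hVA : Vᵀ * H.submatrix id (complSumEquiv J hJ ∘ Sum.inl) = 0 := by
    rw [← submatrix_id_id Vᵀ, ← submatrix_mul _ _ _ _ _ Function.bijective_id, hVH,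
      submatrix_zero]
    rfl
  rw [delSub_eq_submatrix, delSub_eq_submatrix, rowSub_eq_submatrix, rowSub_eq_submatrix]
  exact sq_det_submatrix_mul_det_submatrix_compl _ V hVA (complSumEquiv I' hI')
    (complSumEquiv I hI)

theorem stmt_14_general (N r : ℕ)
    (H : Matrix (Fin N) (Fin N) ℂ) (hSymm : H.IsSymm)
    (V : Matrix (Fin N) (Fin r) ℂ)
    (hnull : LinearMap.ker H.mulVecLin = LinearMap.range V.mulVecLin)
    (I J I' J' : Finset (Fin N))
    (hI : I.card = r) (hJ : J.card = r) (hI' : I'.card = r) (hJ' : J'.card = r)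
    (dI : (rowSub V I hI).det ≠ 0) (dJ : (rowSub V J hJ).det ≠ 0)
    (dI' : (rowSub V I' hI').det ≠ 0) (dJ' : (rowSub V J' hJ').det ≠ 0) :
    (delSub H I J hI hJ).det / ((rowSub V I hI).det * (rowSub V J hJ).det)
        = (delSub H I' J' hI' hJ').det / ((rowSub V I' hI').det * (rowSub V J' hJ').det)
    ∨ (delSub H I J hI hJ).det / ((rowSub V I hI).det * (rowSub V J hJ).det)
        = -((delSub H I' J' hI' hJ').det / ((rowSub V I' hI').det * (rowSub V J' hJ').det)) := by
  have hVH : Vᵀ * H = 0 := by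
    rw [← hSymm.eq, ← transpose_mul, mul_eq_zero_of_range_mulVecLin_le_ker hnull.ge,
      transpose_zero]
  have hrows := sq_det_delSub_mul_det_rowSub hVH I I' J hI hI' hJ
  have hcols := sq_det_delSub_mul_det_rowSub hVH J J' I' hJ hJ' hI'
  rw [det_delSub_comm hSymm J I', det_delSub_comm hSymm J' I'] at hcols
  rw [← sq_eq_sq_iff_eq_or_eq_neg, div_pow, div_pow,
    div_eq_div_iff (by simp [dI, dJ]) (by simp [dI', dJ'])]
  linear_combination (rowSub V J' hJ').det ^ 2 * hrows
    + (rowSub V I hI).det ^ 2 * hcols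

/-- the reduced determinant det(H^I_J)/(det V_I · det V_J) is independent,
up to sign, of the choice of deleted rows I and columns J, whenever the corresponding
minors of the null-space matrix V are nonzero. -/
theorem stmt_14 (N r : ℕ) (hN : 1 ≤ N) (hr : r ≤ N)
    (H : Matrix (Fin N) (Fin N) ℂ) (hSymm : H.IsSymm)
    (V : Matrix (Fin N) (Fin r) ℂ)
    (hnull : LinearMap.ker H.mulVecLin = LinearMap.range V.mulVecLin)
    (I J I' J' : Finset (Fin N))
    (hI : I.card = r) (hJ : J.card = r) (hI' : I'.card = r) (hJ' : J'.card = r)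
    (dI : (rowSub V I hI).det ≠ 0) (dJ : (rowSub V J hJ).det ≠ 0)
    (dI' : (rowSub V I' hI').det ≠ 0) (dJ' : (rowSub V J' hJ').det ≠ 0) :
    (delSub H I J hI hJ).det / ((rowSub V I hI).det * (rowSub V J hJ).det)
        = (delSub H I' J' hI' hJ').det / ((rowSub V I' hI').det * (rowSub V J' hJ').det)
    ∨ (delSub H I J hI hJ).det / ((rowSub V I hI).det * (rowSub V J hJ).det)
        = -((delSub H I' J' hI' hJ').det / ((rowSub V I' hI').det * (rowSub V J' hJ').det)) :=
  stmt_14_general N r H hSymm V hnull I J I' J' hI hJ hI' hJ' dI dJ dI' dJ'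

end Stmt14
end

section
/- The triple integral over y₁, y₂, y₃ ∈ (0, ∞) of the function min(1, y₁) · min(y₁, y₂) · min(y₂, y₃) · min(1, y₁, y₂, y₃) / (y₁² y₂² y₃²) equals 14, where min(1, y₁, y₂, y₃) denotes the minimum of the four numbers. -/
/-!
The integral is evaluated from the inside out. Pulling out the factors free of `y₃` and
writing `min 1 (min y₁ (min y₂ y₃)) = min b y₃` with `b = min (min 1 y₁) y₂ ≤ y₂`, the innermost
integral is `∫₀^∞ min(a,y) min(b,y) / y² dy = b (2 + log (a/b))` for `b ≤ a`, which is
elementary on each of `(0,b]`, `(b,a]`, `(a,∞)`. The middle integral is then of the same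
piecewise kind and equals `(m/y₁)² (5 + 3L + L²/2)` with `m = min 1 y₁`, `L = log (y₁/m)`:
this is `5` on `(0,1]`, and its integral over `(1,∞)` is `9`, for a total of `14`.

Every improper integral is obtained from an antiderivative tending to `0` at infinity; the
integrands are nonnegative, which makes them integrable for free.
-/

open MeasureTheory Set Real Filter Topology

def HasIntegralOn (f : ℝ → ℝ) (s : Set ℝ) (I : ℝ) : Prop :=
  IntegrableOn f s ∧ ∫ x in s, f x = I

namespace HasIntegralOn

variable {f g : ℝ → ℝ} {s t : Set ℝ} {I J : ℝ}

theorem congr (h : HasIntegralOn g s I) (hs : MeasurableSet s) (hfg : EqOn f g s) :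
    HasIntegralOn f s I :=
  ⟨h.1.congr_fun hfg.symm hs, (setIntegral_congr_fun hs hfg).trans h.2⟩

theorem const_mul (h : HasIntegralOn f s I) (c : ℝ) :
    HasIntegralOn (fun x => c * f x) s (c * I) :=
  ⟨h.1.const_mul c, by rw [integral_const_mul, h.2]⟩

theorem union (h₁ : HasIntegralOn f s I) (h₂ : HasIntegralOn f t J) (hst : Disjoint s t)
    (ht : MeasurableSet t) : HasIntegralOn f (s ∪ t) (I + J) :=
  ⟨h₁.1.union h₂.1, by rw [setIntegral_union hst ht h₁.1 h₂.1, h₁.2, h₂.2]⟩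

theorem Ioc_union_Ioi {a b : ℝ} (h₁ : HasIntegralOn f (Ioc a b) I)
    (h₂ : HasIntegralOn f (Ioi b) J) (hab : a ≤ b) : HasIntegralOn f (Ioi a) (I + J) := by
  simpa only [Ioc_union_Ioi_eq_Ioi hab] using
    h₁.union h₂ Ioc_disjoint_Ioi_same measurableSet_Ioi

end HasIntegralOn

theorem hasIntegralOn_const_Ioc (c : ℝ) {a b : ℝ} (hab : a ≤ b) :
    HasIntegralOn (fun _ => c) (Ioc a b) (c * (b - a)) :=
  ⟨integrableOn_const measure_Ioc_lt_top.ne, by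
    rw [setIntegral_const, Real.volume_real_Ioc_of_le hab, smul_eq_mul, mul_comm]⟩

theorem hasIntegralOn_Ioc_of_hasDerivAt {G g : ℝ → ℝ} {a b : ℝ} (hab : a ≤ b)
    (hG : ∀ x ∈ Icc a b, HasDerivAt G (g x) x) (hg : ∀ x ∈ Ioo a b, 0 ≤ g x) :
    HasIntegralOn g (Ioc a b) (G b - G a) := by
  have hcont : ContinuousOn G (Icc a b) := fun x hx => (hG x hx).continuousAt.continuousWithinAt
  have hderiv : ∀ x ∈ Ioo a b, HasDerivAt G (g x) x := fun x hx => hG x (Ioo_subset_Icc_self hx)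
  have hint := intervalIntegral.integrableOn_deriv_of_nonneg hcont hderiv hg
  refine ⟨hint, ?_⟩
  rw [← intervalIntegral.integral_of_le hab]
  exact intervalIntegral.integral_eq_sub_of_hasDerivAt_of_le hab hcont hderiv
    ((intervalIntegrable_iff_integrableOn_Ioc_of_le hab).2 hint)

theorem hasIntegralOn_Ioi_of_hasDerivAt {G g : ℝ → ℝ} {a : ℝ}
    (hG : ∀ x ∈ Ici a, HasDerivAt G (g x) x) (hg : ∀ x ∈ Ioi a, 0 ≤ g x)
    (hG_top : Tendsto G atTop (𝓝 0)) : HasIntegralOn g (Ioi a) (-G a) :=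
  ⟨integrableOn_Ioi_deriv_of_nonneg' hG hg hG_top, by
    rw [integral_Ioi_of_hasDerivAt_of_nonneg' hG hg hG_top, zero_sub]⟩

theorem tendsto_log_pow_div_atTop (n : ℕ) : Tendsto (fun y => log y ^ n / y) atTop (𝓝 0) := by
  simpa using tendsto_pow_log_div_mul_add_atTop 1 0 n one_ne_zero

theorem hasIntegralOn_inv_Ioc {c d : ℝ} (hc : 0 < c) (hcd : c ≤ d) :
    HasIntegralOn (fun y => y⁻¹) (Ioc c d) (log d - log c) :=
  hasIntegralOn_Ioc_of_hasDerivAt hcd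
    (fun _ hx => hasDerivAt_log (hc.trans_le hx.1).ne')
    (fun _ hx => inv_nonneg.2 (hc.trans hx.1).le)

theorem hasIntegralOn_add_log_div_Ioc {k c d : ℝ} (hc : 0 < c) (hcd : c ≤ d)
    (hk : 0 ≤ k + log c) :
    HasIntegralOn (fun y => (k + log y) / y) (Ioc c d)
      (k * (log d - log c) + (log d ^ 2 - log c ^ 2) / 2) := by
  have hderiv (x : ℝ) (hx : x ∈ Icc c d) :
      HasDerivAt (fun y => k * log y + log y ^ 2 / 2) ((k + log x) / x) x := by
    have hx : x ≠ 0 := (hc.trans_le hx.1).ne'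
    refine (((hasDerivAt_log hx).const_mul k).fun_add
      (((hasDerivAt_log hx).fun_pow 2).div_const 2)).congr_deriv ?_
    field_simp
    ring
  have hpos (x : ℝ) (hx : x ∈ Ioo c d) : 0 ≤ (k + log x) / x := by
    have : log c ≤ log x := log_le_log hc hx.1.le
    exact div_nonneg (by linarith) (hc.trans hx.1).le
  convert hasIntegralOn_Ioc_of_hasDerivAt hcd hderiv hpos using 1
  ring

theorem hasIntegralOn_inv_sq_Ioi {c : ℝ} (hc : 0 < c) :
    HasIntegralOn (fun y => (y ^ 2)⁻¹) (Ioi c) c⁻¹ := by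
  have h := hasIntegralOn_Ioi_of_hasDerivAt (G := fun y => -y⁻¹) (g := fun y => (y ^ 2)⁻¹)
    (fun x hx => by simpa using (hasDerivAt_inv (hc.trans_le hx).ne').fun_neg)
    (fun x _ => by positivity) (by simpa using (tendsto_inv_atTop_zero (𝕜 := ℝ)).neg)
  simpa using h

theorem hasIntegralOn_add_log_div_sq_Ioi {k t : ℝ} (ht : 0 < t) (hk : 0 ≤ k + log t) :
    HasIntegralOn (fun y => (k + log y) / y ^ 2) (Ioi t) ((k + 1 + log t) / t) := by
  have hlim : Tendsto (fun y => -(k + 1 + log y) / y) atTop (𝓝 0) := by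
    have := ((tendsto_log_pow_div_atTop 0).const_mul (k + 1)).add (tendsto_log_pow_div_atTop 1)
    rw [mul_zero, add_zero] at this
    refine (neg_zero (G := ℝ) ▸ this.neg).congr fun y => ?_
    rw [pow_zero, pow_one]
    ring
  have hderiv (x : ℝ) (hx : x ∈ Ici t) :
      HasDerivAt (fun y => -(k + 1 + log y) / y) ((k + log x) / x ^ 2) x := by
    have hx : x ≠ 0 := (ht.trans_le hx).ne'
    refine (((hasDerivAt_log hx).const_add (k + 1)).fun_neg.fun_div (hasDerivAt_id' x)
      hx).congr_deriv ?_
    field_simp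
    ring
  have hpos (x : ℝ) (hx : x ∈ Ioi t) : 0 ≤ (k + log x) / x ^ 2 := by
    have : log t ≤ log x := log_le_log ht (le_of_lt hx)
    exact div_nonneg (by linarith) (sq_nonneg x)
  convert hasIntegralOn_Ioi_of_hasDerivAt hderiv hpos hlim using 1
  ring

theorem hasIntegralOn_log_quadratic_div_sq_Ioi_one :
    HasIntegralOn (fun y => (5 + 3 * log y + log y ^ 2 / 2) / y ^ 2) (Ioi 1) 9 := by
  have hlim : Tendsto (fun y => -(9 + 4 * log y + log y ^ 2 / 2) / y) atTop (𝓝 0) := by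
    have := (((tendsto_log_pow_div_atTop 0).const_mul 9).add
      (((tendsto_log_pow_div_atTop 1).const_mul 4).add
        ((tendsto_log_pow_div_atTop 2).div_const 2)))
    rw [mul_zero, mul_zero, zero_div, add_zero, add_zero] at this
    refine (neg_zero (G := ℝ) ▸ this.neg).congr fun y => ?_
    rw [pow_zero, pow_one]
    ring
  have hderiv (x : ℝ) (hx : x ∈ Ici 1) :
      HasDerivAt (fun y => -(9 + 4 * log y + log y ^ 2 / 2) / y)
        ((5 + 3 * log x + log x ^ 2 / 2) / x ^ 2) x := by
    have hx : x ≠ 0 := (one_pos.trans_le hx).ne'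
    refine (((((hasDerivAt_log hx).const_mul 4).const_add 9).fun_add
      (((hasDerivAt_log hx).fun_pow 2).div_const 2)).fun_neg.fun_div
        (hasDerivAt_id' x) hx).congr_deriv ?_
    field_simp
    ring
  have hpos (x : ℝ) (hx : x ∈ Ioi 1) : 0 ≤ (5 + 3 * log x + log x ^ 2 / 2) / x ^ 2 := by
    have : 0 ≤ log x := log_nonneg (le_of_lt hx)
    positivity
  convert hasIntegralOn_Ioi_of_hasDerivAt hderiv hpos hlim using 1
  norm_num

theorem integral_min_mul_min_div_sq {a b : ℝ} (hb : 0 < b) (hba : b ≤ a) :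
    ∫ y in Ioi 0, min a y * min b y / y ^ 2 = b * (2 + (log a - log b)) := by
  have ha := hb.trans_le hba
  have h₁ : HasIntegralOn (fun y => min a y * min b y / y ^ 2) (Ioc 0 b) (1 * (b - 0)) :=
    (hasIntegralOn_const_Ioc 1 hb.le).congr measurableSet_Ioc fun y hy => by
      dsimp only
      rw [min_eq_right (hy.2.trans hba), min_eq_right hy.2]
      field_simp [hy.1.ne']
  have h₂ : HasIntegralOn (fun y => min a y * min b y / y ^ 2) (Ioc b a)
      (b * (log a - log b)) :=
    ((hasIntegralOn_inv_Ioc hb hba).const_mul b).congr measurableSet_Ioc fun y hy => by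
      dsimp only
      rw [min_eq_right hy.2, min_eq_left hy.1.le]
      field_simp [(hb.trans hy.1).ne']
  have h₃ : HasIntegralOn (fun y => min a y * min b y / y ^ 2) (Ioi a) (a * b * a⁻¹) :=
    ((hasIntegralOn_inv_sq_Ioi ha).const_mul (a * b)).congr measurableSet_Ioi fun y hy => by
      dsimp only
      rw [min_eq_left hy.le, min_eq_left (hba.trans hy.le)]
      ring
  rw [(h₁.Ioc_union_Ioi (h₂.Ioc_union_Ioi h₃ hba) hb.le).2]
  field_simp
  ring

theorem integral_min_mul_min_mul_log_div_sq {s t : ℝ} (ht : 0 < t) (hts : t ≤ s) :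
    ∫ y in Ioi 0, min s y * min t y * (2 + (log y - log (min t y))) / y ^ 2
      = t * (5 + 3 * (log s - log t) + (log s - log t) ^ 2 / 2) := by
  have hs := ht.trans_le hts
  have hlog : log t ≤ log s := log_le_log ht hts
  have h₁ : HasIntegralOn (fun y => min s y * min t y * (2 + (log y - log (min t y))) / y ^ 2)
      (Ioc 0 t) (2 * (t - 0)) :=
    (hasIntegralOn_const_Ioc 2 ht.le).congr measurableSet_Ioc fun y hy => by
      dsimp only
      rw [min_eq_right (hy.2.trans hts), min_eq_right hy.2, sub_self, add_zero]
      field_simp [hy.1.ne']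
  have h₂ : HasIntegralOn (fun y => min s y * min t y * (2 + (log y - log (min t y))) / y ^ 2)
      (Ioc t s) (t * ((2 - log t) * (log s - log t) + (log s ^ 2 - log t ^ 2) / 2)) :=
    ((hasIntegralOn_add_log_div_Ioc ht hts (by linarith)).const_mul t).congr
      measurableSet_Ioc fun y hy => by
      dsimp only
      rw [min_eq_right hy.2, min_eq_left hy.1.le]
      field_simp [(ht.trans hy.1).ne']
      ring
  have h₃ : HasIntegralOn (fun y => min s y * min t y * (2 + (log y - log (min t y))) / y ^ 2)
      (Ioi s) (s * t * ((2 - log t + 1 + log s) / s)) :=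
    ((hasIntegralOn_add_log_div_sq_Ioi hs (by linarith)).const_mul (s * t)).congr
      measurableSet_Ioi fun y hy => by
      dsimp only
      rw [min_eq_left hy.le, min_eq_left (hts.trans hy.le)]
      ring
  rw [(h₁.Ioc_union_Ioi (h₂.Ioc_union_Ioi h₃ hts) ht.le).2]
  field_simp
  ring

theorem integral_Ioi_innermost {y₁ y₂ : ℝ} (h₁ : 0 < y₁) (h₂ : 0 < y₂) :
    ∫ y₃ in Ioi 0, min 1 y₁ * min y₁ y₂ * min y₂ y₃ * min 1 (min y₁ (min y₂ y₃))
        / (y₁ ^ 2 * y₂ ^ 2 * y₃ ^ 2)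
      = min 1 y₁ / y₁ ^ 2 * (min y₁ y₂ * min (min 1 y₁) y₂
          * (2 + (log y₂ - log (min (min 1 y₁) y₂))) / y₂ ^ 2) := by
  have hb : 0 < min (min 1 y₁) y₂ := lt_min (lt_min one_pos h₁) h₂
  have hfactor (y₃ : ℝ) : min 1 y₁ * min y₁ y₂ * min y₂ y₃ * min 1 (min y₁ (min y₂ y₃))
        / (y₁ ^ 2 * y₂ ^ 2 * y₃ ^ 2)
      = min 1 y₁ * min y₁ y₂ / (y₁ ^ 2 * y₂ ^ 2)
          * (min y₂ y₃ * min (min (min 1 y₁) y₂) y₃ / y₃ ^ 2) := by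
    simp only [min_assoc]
    ring
  simp_rw [hfactor]
  rw [integral_const_mul, integral_min_mul_min_div_sq hb (min_le_right _ _)]
  field_simp

theorem integral_Ioi_middle {y₁ : ℝ} (h₁ : 0 < y₁) :
    ∫ y₂ in Ioi 0, ∫ y₃ in Ioi 0, min 1 y₁ * min y₁ y₂ * min y₂ y₃
        * min 1 (min y₁ (min y₂ y₃)) / (y₁ ^ 2 * y₂ ^ 2 * y₃ ^ 2)
      = (min 1 y₁ / y₁) ^ 2 * (5 + 3 * (log y₁ - log (min 1 y₁))
          + (log y₁ - log (min 1 y₁)) ^ 2 / 2) := by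
  rw [setIntegral_congr_fun measurableSet_Ioi fun y₂ hy₂ => integral_Ioi_innermost h₁ hy₂,
    integral_const_mul,
    integral_min_mul_min_mul_log_div_sq (lt_min one_pos h₁) (min_le_right 1 y₁)]
  field_simp

/-- the Laplace-transform integral computing m₆^{(2)}(𝕀,𝕀) on planar
kinematics equals 14, the fourth Catalan number. -/
theorem stmt_15 :
    ∫ y₁ in Set.Ioi (0 : ℝ), ∫ y₂ in Set.Ioi (0 : ℝ), ∫ y₃ in Set.Ioi (0 : ℝ),
      (min 1 y₁ * min y₁ y₂ * min y₂ y₃ * min 1 (min y₁ (min y₂ y₃)))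
        / (y₁ ^ 2 * y₂ ^ 2 * y₃ ^ 2) = 14 := by
  refine (HasIntegralOn.Ioc_union_Ioi (I := 5 * (1 - 0)) (J := 9) ?_ ?_ zero_le_one).2.trans
    (by norm_num)
  · refine (hasIntegralOn_const_Ioc 5 zero_le_one).congr measurableSet_Ioc fun y hy => ?_
    dsimp only
    rw [integral_Ioi_middle hy.1, min_eq_right hy.2, sub_self, div_self hy.1.ne']
    norm_num
  · refine hasIntegralOn_log_quadratic_div_sq_Ioi_one.congr measurableSet_Ioi fun y hy => ?_
    dsimp only
    rw [integral_Ioi_middle (one_pos.trans hy), min_eq_left hy.le, log_one, sub_zero]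
    ring
end
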